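/- arXiv:math/9609204 — 3 statements merged into one kernel-verified Lean document; each statement's English description precedes it below -/
import Mathlib

section
/- ℋ∞ ⊆ 𝒢⁺: if (F,x,y) ∈ ℋ∞, then there exists φ ∈ S⁺_{F,(x,y)} with domain [x,+∞). -/
open Set Filter Topology
open scoped Classical

noncomputable section

/-- The interval `[x, b)` as a subset of `ℝ`, where `b : EReal` may be `+∞`. -/
def Dom (x : ℝ) (b : EReal) : Set ℝ := {t : ℝ | x ≤ t ∧ (t : EReal) < b}

/-- `φ` solves `φ' = F(t, φ(t))`, `φ(x) = y` on `[x, b)` (at `x` the right derivative;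
since `F` is continuous this automatically makes `φ` continuously differentiable). -/
def PSol (F : C(ℝ × ℝ, ℝ)) (x y : ℝ) (b : EReal) (φ : ℝ → ℝ) : Prop :=
  (x : EReal) < b ∧ φ x = y ∧
    ∀ t ∈ Dom x b, HasDerivWithinAt φ (F (t, φ t)) (Dom x b) t

/-- `φ ∈ S⁺_{F,(x,y)}` with domain `[x, b)`: a solution which is non-extendible to the
right, i.e. admits no extension to a solution on a strictly larger interval `[x, b')`. -/
def SolPlus (F : C(ℝ × ℝ, ℝ)) (x y : ℝ) (b : EReal) (φ : ℝ → ℝ) : Prop :=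
  PSol F x y b φ ∧
    ∀ (b' : EReal) (ψ : ℝ → ℝ), b < b' → (∀ t ∈ Dom x b, ψ t = φ t) →
      ¬ PSol F x y b' ψ

/-- The filter `t → b⁻` on `ℝ` (equal to `atTop` when `b = ⊤`). -/
def leftLim (b : EReal) : Filter ℝ :=
  Filter.comap (fun t : ℝ => (t : EReal)) (nhdsWithin b (Iio b))

/-- `lim₊ φ = +∞` for `φ` with domain `[x, b)`. -/
def LimPlusTop (φ : ℝ → ℝ) (b : EReal) : Prop := Tendsto φ (leftLim b) atTop

/-- `lim₊ φ = -∞` for `φ` with domain `[x, b)`. -/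
def LimPlusBot (φ : ℝ → ℝ) (b : EReal) : Prop := Tendsto φ (leftLim b) atBot

/-- `‖φ ↾ [x, c]‖_∞ ≤ h`. -/
def SupNormLe (φ : ℝ → ℝ) (x c h : ℝ) : Prop := ∀ t ∈ Icc x c, |φ t| ≤ h

/-- `𝒢⁺`: the set of `(F, x, y)` such that some `φ ∈ S⁺_{F,(x,y)}` has domain `[x, +∞)`. -/
def Gplus : Set (C(ℝ × ℝ, ℝ) × ℝ × ℝ) :=
  {p | ∃ φ : ℝ → ℝ, SolPlus p.1 p.2.1 p.2.2 (⊤ : EReal) φ}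

/-- `ℋ₋`: there are `N, h ∈ ℕ` such that for every `n ≥ 1` some `φ_n ∈ S⁺_{F,(x,y)}`
satisfies `[x, x+N+n] ⊂ dom(φ_n)` and `‖φ_n ↾ [x, x+N]‖_∞ ≤ h`, but no `φ ∈ S⁺_{F,(x,y)}`
satisfies `[x, x+N] ⊂ dom(φ)`, `‖φ ↾ [x, x+N]‖_∞ ≤ h` and `lim₊ φ = -∞`. -/
def Hminus : Set (C(ℝ × ℝ, ℝ) × ℝ × ℝ) :=
  {p | ∃ N h : ℕ,
    (∀ n : ℕ, 1 ≤ n → ∃ (b : EReal) (φ : ℝ → ℝ), SolPlus p.1 p.2.1 p.2.2 b φ ∧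
      ((p.2.1 + N + n : ℝ) : EReal) < b ∧ SupNormLe φ p.2.1 (p.2.1 + N) h) ∧
    ¬ ∃ (b : EReal) (φ : ℝ → ℝ), SolPlus p.1 p.2.1 p.2.2 b φ ∧
      ((p.2.1 + N : ℝ) : EReal) < b ∧ SupNormLe φ p.2.1 (p.2.1 + N) h ∧ LimPlusBot φ b}

/-- `ℋ₊`: defined as `ℋ₋`, replacing `lim₊ φ = -∞` by `lim₊ φ = +∞`. -/
def Hplus : Set (C(ℝ × ℝ, ℝ) × ℝ × ℝ) :=
  {p | ∃ N h : ℕ,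
    (∀ n : ℕ, 1 ≤ n → ∃ (b : EReal) (φ : ℝ → ℝ), SolPlus p.1 p.2.1 p.2.2 b φ ∧
      ((p.2.1 + N + n : ℝ) : EReal) < b ∧ SupNormLe φ p.2.1 (p.2.1 + N) h) ∧
    ¬ ∃ (b : EReal) (φ : ℝ → ℝ), SolPlus p.1 p.2.1 p.2.2 b φ ∧
      ((p.2.1 + N : ℝ) : EReal) < b ∧ SupNormLe φ p.2.1 (p.2.1 + N) h ∧ LimPlusTop φ b}

/-- `ℋ∞`: for every `n ≥ 1` there are `φ_n, ψ_n ∈ S⁺_{F,(x,y)}` with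
`[x, x+n] ⊂ dom(φ_n) ∩ dom(ψ_n)`, `lim₊ φ_n = +∞` and `lim₊ ψ_n = -∞`. -/
def Hinfty : Set (C(ℝ × ℝ, ℝ) × ℝ × ℝ) :=
  {p | ∀ n : ℕ, 1 ≤ n → ∃ (bφ bψ : EReal) (φ ψ : ℝ → ℝ),
    SolPlus p.1 p.2.1 p.2.2 bφ φ ∧ SolPlus p.1 p.2.1 p.2.2 bψ ψ ∧
    ((p.2.1 + n : ℝ) : EReal) < bφ ∧ ((p.2.1 + n : ℝ) : EReal) < bψ ∧
    LimPlusTop φ bφ ∧ LimPlusBot ψ bψ}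

/-! ### Auxiliary lemmas for the proof of Lemma 5.17 -/


lemma abs_max_le_max_abs (a b : ℝ) : |max a b| ≤ max |a| |b| := by
  rcases max_cases a b with ⟨h, _⟩ | ⟨h, _⟩ <;> rw [h] <;>
    [exact le_max_left _ _; exact le_max_right _ _]

lemma abs_min_le_max_abs (a b : ℝ) : |min a b| ≤ max |a| |b| := by
  rcases min_cases a b with ⟨h, _⟩ | ⟨h, _⟩ <;> rw [h] <;>
    [exact le_max_left _ _; exact le_max_right _ _]

lemma hasDerivWithinAt_max_of_eq {f g : ℝ → ℝ} {d : ℝ} {s : Set ℝ} {t : ℝ}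
    (hfg : f t = g t) (hf : HasDerivWithinAt f d s t) (hg : HasDerivWithinAt g d s t) :
    HasDerivWithinAt (fun u => max (f u) (g u)) d s t := by
  rw [hasDerivWithinAt_iff_isLittleO] at hf hg ⊢
  rw [Asymptotics.isLittleO_iff] at hf hg ⊢
  intro c hc
  filter_upwards [hf hc, hg hc] with u hu1 hu2
  have h1 : max (f u) (g u) - max (f t) (g t) - (u - t) • d
      = max (f u - f t - (u - t) • d) (g u - g t - (u - t) • d) := by
    rw [hfg, max_self, ← max_sub_sub_right, ← max_sub_sub_right]
  rw [Real.norm_eq_abs, h1]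
  calc |max (f u - f t - (u - t) • d) (g u - g t - (u - t) • d)|
      ≤ max |f u - f t - (u - t) • d| |g u - g t - (u - t) • d| := abs_max_le_max_abs _ _
    _ ≤ c * ‖u - t‖ := max_le hu1 hu2

lemma hasDerivWithinAt_min_of_eq {f g : ℝ → ℝ} {d : ℝ} {s : Set ℝ} {t : ℝ}
    (hfg : f t = g t) (hf : HasDerivWithinAt f d s t) (hg : HasDerivWithinAt g d s t) :
    HasDerivWithinAt (fun u => min (f u) (g u)) d s t := by
  rw [hasDerivWithinAt_iff_isLittleO] at hf hg ⊢
  rw [Asymptotics.isLittleO_iff] at hf hg ⊢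
  intro c hc
  filter_upwards [hf hc, hg hc] with u hu1 hu2
  have h1 : min (f u) (g u) - min (f t) (g t) - (u - t) • d
      = min (f u - f t - (u - t) • d) (g u - g t - (u - t) • d) := by
    rw [hfg, min_self, ← min_sub_sub_right, ← min_sub_sub_right]
  rw [Real.norm_eq_abs, h1]
  calc |min (f u - f t - (u - t) • d) (g u - g t - (u - t) • d)|
      ≤ max |f u - f t - (u - t) • d| |g u - g t - (u - t) • d| := abs_min_le_max_abs _ _
    _ ≤ c * ‖u - t‖ := max_le hu1 hu2

/-- `φ` solves the ODE (with initial condition) on the set `s`. -/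
def SolOn (F : C(ℝ × ℝ, ℝ)) (x y : ℝ) (s : Set ℝ) (φ : ℝ → ℝ) : Prop :=
  φ x = y ∧ ∀ t ∈ s, HasDerivWithinAt φ (F (t, φ t)) s t

namespace SolOn

variable {F : C(ℝ × ℝ, ℝ)} {x y : ℝ} {s s' : Set ℝ} {f g : ℝ → ℝ}

lemma continuousOn (hf : SolOn F x y s f) : ContinuousOn f s :=
  fun t ht => (hf.2 t ht).continuousWithinAt

lemma mono (hf : SolOn F x y s f) (h : s' ⊆ s) : SolOn F x y s' f :=
  ⟨hf.1, fun t ht => ((hf.2 t (h ht)).mono h)⟩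

lemma sup (hf : SolOn F x y s f) (hg : SolOn F x y s g) :
    SolOn F x y s (fun t => max (f t) (g t)) := by
  refine ⟨by simp [hf.1, hg.1], fun t ht => ?_⟩
  rcases lt_trichotomy (f t) (g t) with h | h | h
  · have hev : ∀ᶠ u in 𝓝[s] t, f u < g u := by
      have : Tendsto (fun u => g u - f u) (𝓝[s] t) (𝓝 (g t - f t)) :=
        ((hg.2 t ht).continuousWithinAt.sub (hf.2 t ht).continuousWithinAt)
      have hpos : 0 < g t - f t := by linarith
      filter_upwards [this.eventually (eventually_gt_nhds hpos)] with u hu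
      linarith
    have heq : (fun u => Max.max (f u) (g u)) =ᶠ[𝓝[s] t] g := by
      filter_upwards [hev] with u hu using max_eq_right hu.le
    have h2 : Max.max (f t) (g t) = g t := max_eq_right h.le
    simpa [h2] using ((hg.2 t ht).congr_of_eventuallyEq heq h2)
  · have := hasDerivWithinAt_max_of_eq h (hf.2 t ht) (by rw [h]; exact hg.2 t ht)
    simpa [max_eq_left h.ge] using this
  · have hev : ∀ᶠ u in 𝓝[s] t, g u < f u := by
      have : Tendsto (fun u => f u - g u) (𝓝[s] t) (𝓝 (f t - g t)) :=
        ((hf.2 t ht).continuousWithinAt.sub (hg.2 t ht).continuousWithinAt)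
      have hpos : 0 < f t - g t := by linarith
      filter_upwards [this.eventually (eventually_gt_nhds hpos)] with u hu
      linarith
    have heq : (fun u => Max.max (f u) (g u)) =ᶠ[𝓝[s] t] f := by
      filter_upwards [hev] with u hu using max_eq_left hu.le
    have h2 : Max.max (f t) (g t) = f t := max_eq_left h.le
    simpa [h2] using ((hf.2 t ht).congr_of_eventuallyEq heq h2)

lemma inf (hf : SolOn F x y s f) (hg : SolOn F x y s g) :
    SolOn F x y s (fun t => min (f t) (g t)) := by
  refine ⟨by simp [hf.1, hg.1], fun t ht => ?_⟩
  rcases lt_trichotomy (f t) (g t) with h | h | h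
  · have hev : ∀ᶠ u in 𝓝[s] t, f u < g u := by
      have : Tendsto (fun u => g u - f u) (𝓝[s] t) (𝓝 (g t - f t)) :=
        ((hg.2 t ht).continuousWithinAt.sub (hf.2 t ht).continuousWithinAt)
      have hpos : 0 < g t - f t := by linarith
      filter_upwards [this.eventually (eventually_gt_nhds hpos)] with u hu
      linarith
    have heq : (fun u => Min.min (f u) (g u)) =ᶠ[𝓝[s] t] f := by
      filter_upwards [hev] with u hu using min_eq_left hu.le
    have h2 : Min.min (f t) (g t) = f t := min_eq_left h.le
    simpa [h2] using ((hf.2 t ht).congr_of_eventuallyEq heq h2)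
  · have := hasDerivWithinAt_min_of_eq h (hf.2 t ht) (by rw [h]; exact hg.2 t ht)
    simpa [min_eq_left h.le] using this
  · have hev : ∀ᶠ u in 𝓝[s] t, g u < f u := by
      have : Tendsto (fun u => f u - g u) (𝓝[s] t) (𝓝 (f t - g t)) :=
        ((hf.2 t ht).continuousWithinAt.sub (hg.2 t ht).continuousWithinAt)
      have hpos : 0 < f t - g t := by linarith
      filter_upwards [this.eventually (eventually_gt_nhds hpos)] with u hu
      linarith
    have heq : (fun u => Min.min (f u) (g u)) =ᶠ[𝓝[s] t] g := by
      filter_upwards [hev] with u hu using min_eq_right hu.le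
    have h2 : Min.min (f t) (g t) = g t := min_eq_right h.le
    simpa [h2] using ((hg.2 t ht).congr_of_eventuallyEq heq h2)

end SolOn

variable {F : C(ℝ × ℝ, ℝ)} {x y : ℝ}

lemma SolOn.glueMax {b c : ℝ} {ψ ζ : ℝ → ℝ}
    (hxb : x < b) (hψ : SolOn F x y (Ico x b) ψ) (hζ : SolOn F x y (Ico x c) ζ)
    (hb : Tendsto ψ (𝓝[<] b) atBot) :
    SolOn F x y (Ico x c) (fun t => if t < b then max (ψ t) (ζ t) else ζ t) := by
  set η := fun t => if t < b then max (ψ t) (ζ t) else ζ t with hη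
  refine ⟨by simp only [hη, if_pos hxb, hψ.1, hζ.1, max_self], fun t ht => ?_⟩
  by_cases hcb : c ≤ b
  · have hsub : Ico x c ⊆ Ico x b := Ico_subset_Ico_right hcb
    have hm := (hψ.mono hsub).sup hζ
    have hval : η t = max (ψ t) (ζ t) := if_pos (lt_of_lt_of_le ht.2 hcb)
    rw [hval]
    exact (hm.2 t ht).congr (fun u hu => if_pos (lt_of_lt_of_le hu.2 hcb)) hval
  · push_neg at hcb
    have hIccsub : Icc x b ⊆ Ico x c := fun u hu => ⟨hu.1, lt_of_le_of_lt hu.2 hcb⟩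
    obtain ⟨C, hC⟩ := isCompact_Icc.exists_bound_of_continuousOn (hζ.continuousOn.mono hIccsub)
    have hev : {u | ψ u < -C - 1} ∈ 𝓝[<] b := hb.eventually (eventually_lt_atBot (-C - 1))
    obtain ⟨a, ha, hsub2⟩ := mem_nhdsLT_iff_exists_Ioo_subset.1 hev
    have ha' : max a x < b := max_lt ha hxb
    have hkey : ∀ u ∈ Ioo (max a x) b, ψ u < ζ u := by
      intro u hu
      have h1 : ψ u < -C - 1 := hsub2 ⟨lt_of_le_of_lt (le_max_left a x) hu.1, hu.2⟩
      have h2 : -C ≤ ζ u := by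
        have := hC u ⟨le_trans (le_max_right a x) hu.1.le, hu.2.le⟩
        rw [Real.norm_eq_abs, abs_le] at this; exact this.1
      linarith
    have hηζ : ∀ u ∈ Ico x c ∩ Ioi (max a x), η u = ζ u := by
      intro u hu
      by_cases hub : u < b
      · simp only [hη, if_pos hub]; exact max_eq_right (hkey u ⟨hu.2, hub⟩).le
      · simp only [hη, if_neg hub]
    rcases lt_or_ge t b with htb | htb
    · have h1 := ((hψ.sup (hζ.mono (Ico_subset_Ico_right hcb.le))).2) t ⟨ht.1, htb⟩
      have hval : η t = max (ψ t) (ζ t) := if_pos htb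
      have h2 : HasDerivWithinAt η (F (t, η t)) (Ico x b) t := by
        rw [hval]; exact h1.congr (fun u hu => if_pos hu.2) hval
      have h3 : Ico x b = Ico x c ∩ Iio b := by
        ext u
        constructor
        · exact fun hu => ⟨⟨hu.1, lt_of_lt_of_le hu.2 hcb.le⟩, hu.2⟩
        · exact fun hu => ⟨hu.1.1, hu.2⟩
      rw [h3] at h2
      exact (hasDerivWithinAt_inter (Iio_mem_nhds htb)).1 h2
    · have hval : η t = ζ t := if_neg (not_lt.2 htb)
      have h2 : HasDerivWithinAt η (F (t, η t)) (Ico x c ∩ Ioi (max a x)) t := by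
        rw [hval]
        exact ((hζ.2 t ht).mono inter_subset_left).congr (fun u hu => hηζ u hu) hval
      exact (hasDerivWithinAt_inter (Ioi_mem_nhds (lt_of_lt_of_le ha' htb))).1 h2

lemma SolOn.glueMin {b c : ℝ} {φ ζ : ℝ → ℝ}
    (hxb : x < b) (hφ : SolOn F x y (Ico x b) φ) (hζ : SolOn F x y (Ico x c) ζ)
    (hb : Tendsto φ (𝓝[<] b) atTop) :
    SolOn F x y (Ico x c) (fun t => if t < b then min (φ t) (ζ t) else ζ t) := by
  set η := fun t => if t < b then min (φ t) (ζ t) else ζ t with hη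
  refine ⟨by simp only [hη, if_pos hxb, hφ.1, hζ.1, min_self], fun t ht => ?_⟩
  by_cases hcb : c ≤ b
  · have hsub : Ico x c ⊆ Ico x b := Ico_subset_Ico_right hcb
    have hm := (hφ.mono hsub).inf hζ
    have hval : η t = min (φ t) (ζ t) := if_pos (lt_of_lt_of_le ht.2 hcb)
    rw [hval]
    exact (hm.2 t ht).congr (fun u hu => if_pos (lt_of_lt_of_le hu.2 hcb)) hval
  · push_neg at hcb
    have hIccsub : Icc x b ⊆ Ico x c := fun u hu => ⟨hu.1, lt_of_le_of_lt hu.2 hcb⟩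
    obtain ⟨C, hC⟩ := isCompact_Icc.exists_bound_of_continuousOn (hζ.continuousOn.mono hIccsub)
    have hev : {u | C + 1 < φ u} ∈ 𝓝[<] b := hb.eventually (eventually_gt_atTop (C + 1))
    obtain ⟨a, ha, hsub2⟩ := mem_nhdsLT_iff_exists_Ioo_subset.1 hev
    have ha' : max a x < b := max_lt ha hxb
    have hkey : ∀ u ∈ Ioo (max a x) b, ζ u < φ u := by
      intro u hu
      have h1 : C + 1 < φ u := hsub2 ⟨lt_of_le_of_lt (le_max_left a x) hu.1, hu.2⟩
      have h2 : ζ u ≤ C := by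
        have := hC u ⟨le_trans (le_max_right a x) hu.1.le, hu.2.le⟩
        rw [Real.norm_eq_abs, abs_le] at this; exact this.2
      linarith
    have hηζ : ∀ u ∈ Ico x c ∩ Ioi (max a x), η u = ζ u := by
      intro u hu
      by_cases hub : u < b
      · simp only [hη, if_pos hub]; exact min_eq_right (hkey u ⟨hu.2, hub⟩).le
      · simp only [hη, if_neg hub]
    rcases lt_or_ge t b with htb | htb
    · have h1 := ((hφ.inf (hζ.mono (Ico_subset_Ico_right hcb.le))).2) t ⟨ht.1, htb⟩
      have hval : η t = min (φ t) (ζ t) := if_pos htb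
      have h2 : HasDerivWithinAt η (F (t, η t)) (Ico x b) t := by
        rw [hval]; exact h1.congr (fun u hu => if_pos hu.2) hval
      have h3 : Ico x b = Ico x c ∩ Iio b := by
        ext u
        constructor
        · exact fun hu => ⟨⟨hu.1, lt_of_lt_of_le hu.2 hcb.le⟩, hu.2⟩
        · exact fun hu => ⟨hu.1.1, hu.2⟩
      rw [h3] at h2
      exact (hasDerivWithinAt_inter (Iio_mem_nhds htb)).1 h2
    · have hval : η t = ζ t := if_neg (not_lt.2 htb)
      have h2 : HasDerivWithinAt η (F (t, η t)) (Ico x c ∩ Ioi (max a x)) t := by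
        rw [hval]
        exact ((hζ.2 t ht).mono inter_subset_left).congr (fun u hu => hηζ u hu) hval
      exact (hasDerivWithinAt_inter (Ioi_mem_nhds (lt_of_lt_of_le ha' htb))).1 h2

lemma exists_upperBound_of_tendsto_atBot {ψ : ℝ → ℝ} {x b : ℝ} (hxb : x < b)
    (hc : ContinuousOn ψ (Ico x b)) (hb : Tendsto ψ (𝓝[<] b) atBot) :
    ∃ S, ∀ t ∈ Ico x b, ψ t ≤ S := by
  obtain ⟨a, ha, hsub⟩ := mem_nhdsLT_iff_exists_Ioo_subset.1
    (hb.eventually (eventually_lt_atBot 0) : {u | ψ u < 0} ∈ 𝓝[<] b)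
  have ha' : max a x < b := max_lt ha hxb
  have hIccsub : Icc x (max a x) ⊆ Ico x b := fun u hu => ⟨hu.1, lt_of_le_of_lt hu.2 ha'⟩
  obtain ⟨C, hC⟩ := isCompact_Icc.exists_bound_of_continuousOn (hc.mono hIccsub)
  refine ⟨max C 0, fun t ht => ?_⟩
  by_cases h : t ≤ max a x
  · exact le_trans (le_trans (le_abs_self _) (hC t ⟨ht.1, h⟩)) (le_max_left _ _)
  · push_neg at h
    exact le_trans (hsub ⟨lt_of_le_of_lt (le_max_left a x) h, ht.2⟩).le (le_max_right _ _)

lemma exists_lowerBound_of_tendsto_atTop {φ : ℝ → ℝ} {x b : ℝ} (hxb : x < b)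
    (hc : ContinuousOn φ (Ico x b)) (hb : Tendsto φ (𝓝[<] b) atTop) :
    ∃ I, ∀ t ∈ Ico x b, I ≤ φ t := by
  obtain ⟨a, ha, hsub⟩ := mem_nhdsLT_iff_exists_Ioo_subset.1
    (hb.eventually (eventually_gt_atTop 0) : {u | 0 < φ u} ∈ 𝓝[<] b)
  have ha' : max a x < b := max_lt ha hxb
  have hIccsub : Icc x (max a x) ⊆ Ico x b := fun u hu => ⟨hu.1, lt_of_le_of_lt hu.2 ha'⟩
  obtain ⟨C, hC⟩ := isCompact_Icc.exists_bound_of_continuousOn (hc.mono hIccsub)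
  refine ⟨min (-C) 0, fun t ht => ?_⟩
  by_cases h : t ≤ max a x
  · refine le_trans (min_le_left _ _) ?_
    have := hC t ⟨ht.1, h⟩
    rw [Real.norm_eq_abs, abs_le] at this; exact this.1
  · push_neg at h
    exact le_trans (min_le_right _ _) (hsub ⟨lt_of_le_of_lt (le_max_left a x) h, ht.2⟩).le

/-! ### Analytic helper lemmas -/

lemma myle_of_forall_pos {a b : ℝ} (h : ∀ ε : ℝ, 0 < ε → a ≤ b + ε) : a ≤ b := by
  by_contra hc
  push_neg at hc
  have := h ((a - b) / 2) (by linarith)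
  linarith

lemma lipschitz_of_bound_deriv {F : C(ℝ × ℝ, ℝ)} {a b B K : ℝ} {φ : ℝ → ℝ}
    (h : ∀ t ∈ Icc a b, HasDerivWithinAt φ (F (t, φ t)) (Icc a b) t)
    (hB : ∀ t ∈ Icc a b, |φ t| ≤ B)
    (hK : ∀ p ∈ Icc a b ×ˢ Icc (-B) B, |F p| ≤ K) :
    ∀ t1 ∈ Icc a b, ∀ t2 ∈ Icc a b, |φ t1 - φ t2| ≤ K * |t1 - t2| := by
  intro t1 ht1 t2 ht2
  have := Convex.norm_image_sub_le_of_norm_hasDerivWithin_le (f := φ)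
    (f' := fun t => F (t, φ t)) (s := Icc a b) h
    (fun t ht => by
      rw [Real.norm_eq_abs]
      exact hK _ ⟨ht, abs_le.1 (hB t ht)⟩) (convex_Icc a b) ht2 ht1
  simpa [Real.norm_eq_abs] using this

lemma continuousOn_of_lip {f : ℝ → ℝ} {s : Set ℝ} {L : ℝ}
    (hf : ∀ t1 ∈ s, ∀ t2 ∈ s, |f t1 - f t2| ≤ L * |t1 - t2|) : ContinuousOn f s := by
  have : LipschitzOnWith (Real.toNNReal L) f s := by
    rw [lipschitzOnWith_iff_dist_le_mul]
    intro t1 ht1 t2 ht2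
    rw [Real.dist_eq, Real.dist_eq]
    refine le_trans (hf t1 ht1 t2 ht2) (mul_le_mul_of_nonneg_right ?_ (abs_nonneg _))
    exact Real.le_coe_toNNReal L
  exact this.continuousOn

lemma solOn_integral_eq {F : C(ℝ × ℝ, ℝ)} {φ : ℝ → ℝ} {a b : ℝ}
    (h : ∀ t ∈ Icc a b, HasDerivWithinAt φ (F (t, φ t)) (Icc a b) t) :
    ∀ t ∈ Icc a b, φ t = φ a + ∫ s in a..t, F (s, φ s) := by
  intro t ht
  have hcont : ContinuousOn φ (Icc a b) := fun u hu => (h u hu).continuousWithinAt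
  have hg : ContinuousOn (fun s => F (s, φ s)) (Icc a b) :=
    F.continuous.comp_continuousOn (continuousOn_id.prodMk hcont)
  have key : ∫ s in a..t, F (s, φ s) = φ t - φ a := by
    apply intervalIntegral.integral_eq_sub_of_hasDeriv_right_of_le ht.1
      (hcont.mono (Icc_subset_Icc_right ht.2)) (fun u hu => ?_)
      ((hg.mono (Icc_subset_Icc_right ht.2)).intervalIntegrable_of_Icc ht.1)
    have hu2 : u ∈ Icc a b := ⟨hu.1.le, le_trans hu.2.le ht.2⟩
    have h1 : HasDerivAt φ (F (u, φ u)) u :=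
      (h u hu2).hasDerivAt (Icc_mem_nhds hu.1 (lt_of_lt_of_le hu.2 ht.2))
    exact h1.hasDerivWithinAt
  rw [key]; ring

lemma grid_point {x c : ℝ} (m : ℕ) (hm : 0 < m) {t : ℝ} (ht : t ∈ Icc x c) :
    ∃ i : ℕ, i ≤ ⌊(c - x) * m⌋₊ ∧ x + i / m ∈ Icc x t ∧ t - (x + i / m) ≤ 1 / m := by
  have hmpos : (0 : ℝ) < m := Nat.cast_pos.2 hm
  have htx : 0 ≤ t - x := by linarith [ht.1]
  refine ⟨⌊(t - x) * m⌋₊, ?_, ⟨by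
    have : (0:ℝ) ≤ (⌊(t - x) * m⌋₊ : ℝ) / m := by positivity
    linarith, ?_⟩, ?_⟩
  · exact Nat.floor_le_floor (mul_le_mul_of_nonneg_right (by linarith [ht.2]) m.cast_nonneg)
  · have h1 : (⌊(t - x) * m⌋₊ : ℝ) ≤ (t - x) * m := Nat.floor_le (by positivity)
    have h2 : (⌊(t - x) * m⌋₊ : ℝ) / m ≤ t - x := by
      rw [div_le_iff₀ hmpos]; linarith
    linarith
  · have h2 : (t - x) * m < ⌊(t - x) * m⌋₊ + 1 := Nat.lt_floor_add_one _
    rw [sub_le_iff_le_add]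
    have : t - x ≤ (⌊(t - x) * m⌋₊ + 1) / m := by
      rw [le_div_iff₀ hmpos]; linarith
    rw [add_div] at this
    linarith

/-! ### EReal helper lemmas -/

lemma Dom_coe (x r : ℝ) : Dom x (r : EReal) = Ico x r := by
  ext t; simp [Dom, Ico, EReal.coe_lt_coe_iff]

lemma Dom_top (x : ℝ) : Dom x (⊤ : EReal) = Ici x := by
  ext t
  simp only [Dom, mem_setOf_eq, mem_Ici]
  exact ⟨fun h => h.1, fun h => ⟨h, EReal.coe_lt_top t⟩⟩

lemma nhdsLT_le_leftLim (r : ℝ) : (𝓝[<] r : Filter ℝ) ≤ leftLim (r : EReal) := by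
  rw [leftLim, ← Filter.map_le_iff_le_comap, nhdsWithin]
  refine le_inf ?_ ?_
  · exact (continuous_coe_real_ereal.tendsto r).comp tendsto_id |>.mono_left nhdsWithin_le_nhds
  · rw [Filter.le_principal_iff, Filter.mem_map]
    refine mem_of_superset self_mem_nhdsWithin ?_
    exact fun t ht => EReal.coe_lt_coe_iff.2 ht

lemma ereal_cases {x : ℝ} (b : EReal) (hb : (x : EReal) < b) :
    b = ⊤ ∨ ∃ r : ℝ, b = (r : EReal) ∧ x < r := by
  induction b using EReal.rec with
  | bot => exact absurd hb (by simp)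
  | coe r => exact Or.inr ⟨r, rfl, EReal.coe_lt_coe_iff.1 hb⟩
  | top => exact Or.inl rfl

lemma trap_lemma {F : C(ℝ × ℝ, ℝ)} {x y rj sj c Ij Sj Aj Dj wj Gj : ℝ} {Φj Ψj ζ : ℝ → ℝ}
    (hxr : x < rj) (hxs : x < sj)
    (hΦ : SolOn F x y (Ico x rj) Φj) (hΨ : SolOn F x y (Ico x sj) Ψj)
    (hΦT : Tendsto Φj (𝓝[<] rj) atTop) (hΨB : Tendsto Ψj (𝓝[<] sj) atBot)
    (hI : ∀ t ∈ Ico x rj, Ij ≤ Φj t) (hS : ∀ t ∈ Ico x sj, Ψj t ≤ Sj)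
    (hA : ∀ t ∈ Icc x wj, ‖Φj t‖ ≤ Aj) (hD : ∀ t ∈ Icc x wj, ‖Ψj t‖ ≤ Dj)
    (hζ : SolOn F x y (Ico x c) ζ) (hwc : wj < c) (hwr : wj < rj) (hws : wj < sj)
    (hG1 : |Ij| ≤ Gj) (hG2 : |Sj| ≤ Gj) (hG3 : Aj ≤ Gj) (hG4 : Dj ≤ Gj) :
    ∃ η, SolOn F x y (Ico x c) η ∧ (∀ t ∈ Icc x wj, |η t| ≤ Gj) ∧
      (∀ t ∈ Ico x c, |η t| ≤ max Gj |ζ t|) := by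
  set ξ : ℝ → ℝ := fun t => if t < sj then max (Ψj t) (ζ t) else ζ t with hξdef
  have hξ : SolOn F x y (Ico x c) ξ := SolOn.glueMax hxs hΨ hζ hΨB
  set η : ℝ → ℝ := fun t => if t < rj then min (Φj t) (ξ t) else ξ t with hηdef
  have hη : SolOn F x y (Ico x c) η := SolOn.glueMin hxr hΦ hξ hΦT
  have hξ1 : ∀ t, ζ t ≤ ξ t := by
    intro t; by_cases h : t < sj
    · simp only [hξdef, if_pos h]; exact le_max_right _ _
    · simp only [hξdef, if_neg h]; exact le_rfl
  have hξ2 : ∀ t ∈ Ico x c, ξ t ≤ max Sj (ζ t) := by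
    intro t ht; by_cases h : t < sj
    · simp only [hξdef, if_pos h]; exact max_le_max (hS t ⟨ht.1, h⟩) le_rfl
    · simp only [hξdef, if_neg h]; exact le_max_right _ _
  have hξ3 : ∀ t, t < sj → Ψj t ≤ ξ t := by
    intro t h; simp only [hξdef, if_pos h]; exact le_max_left _ _
  have hη1 : ∀ t, η t ≤ ξ t := by
    intro t; by_cases h : t < rj
    · simp only [hηdef, if_pos h]; exact min_le_right _ _
    · simp only [hηdef, if_neg h]; exact le_rfl
  have hη2 : ∀ t ∈ Ico x c, min Ij (ξ t) ≤ η t := by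
    intro t ht; by_cases h : t < rj
    · simp only [hηdef, if_pos h]; exact min_le_min (hI t ⟨ht.1, h⟩) le_rfl
    · simp only [hηdef, if_neg h]; exact min_le_right _ _
  have hη3 : ∀ t, t < rj → η t ≤ Φj t := by
    intro t h; simp only [hηdef, if_pos h]; exact min_le_left _ _
  refine ⟨η, hη, ?_, ?_⟩
  · intro t ht
    have htc : t ∈ Ico x c := ⟨ht.1, lt_of_le_of_lt ht.2 hwc⟩
    have htr : t < rj := lt_of_le_of_lt ht.2 hwr
    have hts : t < sj := lt_of_le_of_lt ht.2 hws
    rw [abs_le]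
    constructor
    · have h1 : -Gj ≤ Ij := by
        have := (abs_le.1 hG1).1; linarith
      have h2 : -Gj ≤ Ψj t := by
        have := (abs_le.1 (hD t ht)).1; linarith
      have h3 : min Ij (Ψj t) ≤ min Ij (ξ t) := min_le_min le_rfl (hξ3 t hts)
      have h4 := hη2 t htc
      have h5 : -Gj ≤ min Ij (Ψj t) := le_min h1 h2
      linarith
    · have h1 := hη3 t htr
      have h2 : Φj t ≤ Aj := le_trans (le_abs_self _) (hA t ht)
      linarith
  · intro t ht
    rw [abs_le]
    constructor
    · have h1 : -(max Gj |ζ t|) ≤ Ij := by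
        have := (abs_le.1 hG1).1
        have := le_max_left Gj |ζ t|
        linarith
      have h2 : -(max Gj |ζ t|) ≤ ζ t := by
        have := neg_abs_le (ζ t)
        have := le_max_right Gj |ζ t|
        linarith
      have h3 : min Ij (ζ t) ≤ min Ij (ξ t) := min_le_min le_rfl (hξ1 t)
      have h4 := hη2 t ht
      have h5 : -(max Gj |ζ t|) ≤ min Ij (ζ t) := le_min h1 h2
      linarith
    · have h1 := hη1 t
      have h2 := hξ2 t ht
      have h3 : max Sj (ζ t) ≤ max Gj |ζ t| :=
        max_le_max (le_trans (le_abs_self _) hG2) (le_abs_self _)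
      linarith

set_option maxHeartbeats 2000000 in
/-- Lemma 5.17: `ℋ∞ ⊆ 𝒢⁺`. -/
theorem statement4 : Hinfty ⊆ Gplus := by
  rintro ⟨F, x, y⟩ hp
  simp only [Hinfty, mem_setOf_eq] at hp
  show ∃ φ : ℝ → ℝ, SolPlus F x y (⊤ : EReal) φ
  by_cases hG : ∃ φ : ℝ → ℝ, PSol F x y (⊤ : EReal) φ
  · obtain ⟨φ, hφ⟩ := hG
    exact ⟨φ, hφ, fun b' ψ hb' _ _ => absurd hb' not_top_lt⟩
  exfalso
  -- Step 1 : extract, for each n, solutions blowing up to `+∞` and `-∞` beyond `x+n+1`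
  have hdata : ∀ n : ℕ, ∃ r s : ℝ, ∃ φ ψ : ℝ → ℝ,
      x + n + 1 < r ∧ x + n + 1 < s ∧
      SolOn F x y (Ico x r) φ ∧ SolOn F x y (Ico x s) ψ ∧
      Tendsto φ (𝓝[<] r) atTop ∧ Tendsto ψ (𝓝[<] s) atBot := by
    intro n
    obtain ⟨bφ, bψ, φ, ψ, hφ, hψ, hφn, hψn, hφT, hψB⟩ := hp (n + 1) (Nat.le_add_left 1 n)
    rcases ereal_cases bφ hφ.1.1 with htop | ⟨rr, hbr, hxrr⟩
    · exact absurd ⟨φ, htop ▸ hφ.1⟩ hG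
    rcases ereal_cases bψ hψ.1.1 with htop | ⟨ss, hbs, hxss⟩
    · exact absurd ⟨ψ, htop ▸ hψ.1⟩ hG
    subst hbr; subst hbs
    refine ⟨rr, ss, φ, ψ, ?_, ?_, ?_, ?_, ?_, ?_⟩
    · have := EReal.coe_lt_coe_iff.1 hφn
      push_cast at this
      linarith
    · have := EReal.coe_lt_coe_iff.1 hψn
      push_cast at this
      linarith
    · refine ⟨hφ.1.2.1, ?_⟩
      have := hφ.1.2.2
      rwa [Dom_coe] at this
    · refine ⟨hψ.1.2.1, ?_⟩
      have := hψ.1.2.2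
      rwa [Dom_coe] at this
    · exact hφT.mono_left (nhdsLT_le_leftLim rr)
    · exact hψB.mono_left (nhdsLT_le_leftLim ss)
  clear hp
  choose r s Φ Ψ hr hs hΦ hΨ hΦT hΨB using hdata
  set w : ℕ → ℝ := fun j => x + j + 1 with hw
  have hxw : ∀ j, x < w j := fun j => by
    simp only [hw]
    have : (0:ℝ) ≤ j := Nat.cast_nonneg j
    linarith
  have hwr : ∀ j, w j < r j := hr
  have hws : ∀ j, w j < s j := hs
  have hxr : ∀ j, x < r j := fun j => (hxw j).trans (hwr j)
  have hxs : ∀ j, x < s j := fun j => (hxw j).trans (hws j)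
  have hwmono : ∀ {j k : ℕ}, j ≤ k → w j ≤ w k := fun {j k} h => by
    simp only [hw]
    have : (j:ℝ) ≤ k := Nat.cast_le.2 h
    linarith
  -- Step 2 : global bounds for the blow-up solutions
  choose I hI using fun j =>
    exists_lowerBound_of_tendsto_atTop (hxr j) (hΦ j).continuousOn (hΦT j)
  choose S hS using fun j =>
    exists_upperBound_of_tendsto_atBot (hxs j) (hΨ j).continuousOn (hΨB j)
  have hIccIcoR : ∀ j, Icc x (w j) ⊆ Ico x (r j) :=
    fun j u hu => ⟨hu.1, lt_of_le_of_lt hu.2 (hwr j)⟩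
  have hIccIcoS : ∀ j, Icc x (w j) ⊆ Ico x (s j) :=
    fun j u hu => ⟨hu.1, lt_of_le_of_lt hu.2 (hws j)⟩
  choose A hA using fun j =>
    isCompact_Icc.exists_bound_of_continuousOn ((hΦ j).continuousOn.mono (hIccIcoR j))
  choose D hD using fun j =>
    isCompact_Icc.exists_bound_of_continuousOn ((hΨ j).continuousOn.mono (hIccIcoS j))
  set G : ℕ → ℝ := fun j => max (max |I j| |S j|) (max (A j) (D j)) with hGdef
  have hGnn : ∀ j, 0 ≤ G j := fun j =>
    le_trans (abs_nonneg (I j)) (le_trans (le_max_left _ _) (le_max_left _ _))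
  set B : ℕ → ℝ := fun j => (Finset.range (j + 1)).sup' (Finset.nonempty_range_iff.2 (Nat.succ_ne_zero j)) G with hBdef
  have hGB : ∀ {i j : ℕ}, i ≤ j → G i ≤ B j := fun {i j} h =>
    Finset.le_sup' G (Finset.mem_range.2 (Nat.lt_succ_of_le h))
  have hBnn : ∀ j, 0 ≤ B j := fun j => le_trans (hGnn j) (hGB le_rfl)
  -- Step 3 : the trap operation
  have trap : ∀ (j : ℕ) (c : ℝ) (ζ : ℝ → ℝ), SolOn F x y (Ico x c) ζ → w j < c →
      ∃ η, SolOn F x y (Ico x c) η ∧ (∀ t ∈ Icc x (w j), |η t| ≤ G j) ∧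
        (∀ t ∈ Ico x c, |η t| ≤ max (G j) |ζ t|) := by
    intro j c ζ hζ hwc
    exact trap_lemma (hxr j) (hxs j) (hΦ j) (hΨ j) (hΦT j) (hΨB j) (hI j) (hS j) (hA j) (hD j)
      hζ hwc (hwr j) (hws j)
      (le_trans (le_max_left _ _) (le_max_left _ _))
      (le_trans (le_max_right _ _) (le_max_left _ _))
      (le_trans (le_max_left _ _) (le_max_right _ _))
      (le_trans (le_max_right _ _) (le_max_right _ _))
  -- Step 4 : iterated traps
  have iter : ∀ (k i : ℕ), ∃ ζ, SolOn F x y (Ico x (r k)) ζ ∧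
      ∀ j ≤ k, k < j + i → ∀ t ∈ Icc x (w j), |ζ t| ≤ B j := by
    intro k i
    induction i with
    | zero => exact ⟨Φ k, hΦ k, fun j hj hji => absurd hji (by omega)⟩
    | succ i ih =>
      obtain ⟨ζ, hζ, hbd⟩ := ih
      obtain ⟨η, hη, hw1, hw2⟩ := trap (k - i) (r k) ζ hζ
        (lt_of_le_of_lt (hwmono (Nat.sub_le k i)) (hwr k))
      refine ⟨η, hη, fun j hj hji t ht => ?_⟩
      rcases lt_or_ge k (j + i) with h | h
      · have hme : k - i ≤ j := by omega
        have h2 := hw2 t ⟨ht.1, lt_of_le_of_lt (le_trans ht.2 (hwmono hj)) (hwr k)⟩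
        exact le_trans h2 (max_le (hGB hme) (hbd j hj h t ht))
      · have hkij : k - i = j := by omega
        have h1 := hw1 t (by rw [hkij]; exact ht)
        refine le_trans h1 ?_
        rw [hkij]
        exact hGB le_rfl
  have chi : ∀ k : ℕ, ∃ ζ, SolOn F x y (Icc x (w k)) ζ ∧
      ∀ j ≤ k, ∀ t ∈ Icc x (w j), |ζ t| ≤ B j := by
    intro k
    obtain ⟨ζ, hζ, hbd⟩ := iter k (k + 1)
    exact ⟨ζ, hζ.mono (hIccIcoR k), fun j hj => hbd j hj (by omega)⟩
  clear iter
  -- Step 5 : the families 𝔖 k and their infima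
  set 𝔖 : ℕ → Set (ℝ → ℝ) := fun k =>
    {ζ | SolOn F x y (Icc x (w k)) ζ ∧ ∀ j ≤ k, ∀ t ∈ Icc x (w j), |ζ t| ≤ B j} with h𝔖
  have h𝔖ne : ∀ k, (𝔖 k).Nonempty := fun k => by
    obtain ⟨ζ, h1, h2⟩ := chi k
    exact ⟨ζ, h1, h2⟩
  clear chi
  -- Lipschitz constants
  choose K hK using fun j =>
    (isCompact_Icc.prod isCompact_Icc : IsCompact (Icc x (w j) ×ˢ Icc (-B j) (B j))).exists_bound_of_continuousOn
      (F.continuous.continuousOn)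
  have hKnn : ∀ j, 0 ≤ K j := fun j => by
    have := hK j (x, 0) ⟨⟨le_refl x, (hxw j).le⟩, ⟨neg_nonpos.2 (hBnn j), hBnn j⟩⟩
    exact le_trans (norm_nonneg _) this
  have hmem𝔖 : ∀ {k ζ}, ζ ∈ 𝔖 k → ∀ {j}, j ≤ k → ∀ t ∈ Icc x (w j), |ζ t| ≤ B j :=
    fun {k ζ} hζ {j} hj t ht => hζ.2 j hj t ht
  have hlip : ∀ (k : ℕ) (ζ : ℝ → ℝ), ζ ∈ 𝔖 k → ∀ j ≤ k,
      ∀ t1 ∈ Icc x (w j), ∀ t2 ∈ Icc x (w j), |ζ t1 - ζ t2| ≤ K j * |t1 - t2| := by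
    intro k ζ hζ j hj
    apply lipschitz_of_bound_deriv (F := F) (B := B j)
    · intro t ht
      exact (hζ.1.2 t (Icc_subset_Icc_right (hwmono hj) ht)).mono (Icc_subset_Icc_right (hwmono hj))
    · exact fun t ht => hζ.2 j hj t ht
    · intro p hp
      exact hK j p hp
  -- Step 6 : the infimum functions u k
  set u : ℕ → ℝ → ℝ := fun k t => sInf ((fun ζ => ζ t) '' 𝔖 k) with hudef
  have husetne : ∀ k t, ((fun ζ : ℝ → ℝ => ζ t) '' 𝔖 k).Nonempty :=
    fun k t => (h𝔖ne k).image _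
  have hubdd : ∀ k, ∀ t ∈ Icc x (w k), BddBelow ((fun ζ : ℝ → ℝ => ζ t) '' 𝔖 k) := by
    intro k t ht
    exact ⟨-B k, by rintro z ⟨ζ, hζ, rfl⟩; exact (abs_le.1 (hζ.2 k le_rfl t ht)).1⟩
  have hu_le : ∀ k ζ, ζ ∈ 𝔖 k → ∀ t ∈ Icc x (w k), u k t ≤ ζ t :=
    fun k ζ hζ t ht => csInf_le (hubdd k t ht) ⟨ζ, hζ, rfl⟩
  have hu_ge : ∀ k t (z : ℝ), (∀ ζ ∈ 𝔖 k, z ≤ ζ t) → z ≤ u k t :=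
    fun k t z h => le_csInf (husetne k t) (by rintro w ⟨ζ, hζ, rfl⟩; exact h ζ hζ)
  have hu_bound : ∀ k, ∀ j ≤ k, ∀ t ∈ Icc x (w j), |u k t| ≤ B j := by
    intro k j hj t ht
    obtain ⟨ζ0, hζ0⟩ := h𝔖ne k
    have htk : t ∈ Icc x (w k) := Icc_subset_Icc_right (hwmono hj) ht
    rw [abs_le]
    constructor
    · exact hu_ge k t _ (fun ζ hζ => (abs_le.1 (hζ.2 j hj t ht)).1)
    · exact le_trans (hu_le k ζ0 hζ0 t htk) (abs_le.1 (hζ0.2 j hj t ht)).2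
  have hu_x : ∀ k, u k x = y := by
    intro k
    have hx : x ∈ Icc x (w k) := ⟨le_rfl, (hxw k).le⟩
    obtain ⟨ζ0, hζ0⟩ := h𝔖ne k
    exact le_antisymm (le_trans (hu_le k ζ0 hζ0 x hx) (le_of_eq hζ0.1.1))
      (hu_ge k x y (fun ζ hζ => (hζ.1.1).ge))
  have hu_lip : ∀ k, ∀ j ≤ k, ∀ t1 ∈ Icc x (w j), ∀ t2 ∈ Icc x (w j),
      |u k t1 - u k t2| ≤ K j * |t1 - t2| := by
    intro k j hj t1 ht1 t2 ht2
    have key : ∀ a ∈ Icc x (w j), ∀ b ∈ Icc x (w j), u k a - u k b ≤ K j * |a - b| := by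
      intro a ha b hb
      have hak : a ∈ Icc x (w k) := Icc_subset_Icc_right (hwmono hj) ha
      have hbk : b ∈ Icc x (w k) := Icc_subset_Icc_right (hwmono hj) hb
      have hzb := hu_ge k b (u k a - K j * |a - b|) (fun ζ hζ => by
        have h1 : u k a ≤ ζ a := hu_le k ζ hζ a hak
        have h2 := (abs_le.1 (hlip k ζ hζ j hj a ha b hb)).2
        linarith)
      linarith
    have h1 := key t1 ht1 t2 ht2
    have h2 := key t2 ht2 t1 ht1
    rw [abs_sub_comm t2 t1] at h2
    exact abs_sub_le_iff.2 ⟨h1, h2⟩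
  have hmin𝔖 : ∀ k (ζ1 ζ2 : ℝ → ℝ), ζ1 ∈ 𝔖 k → ζ2 ∈ 𝔖 k →
      (fun t => min (ζ1 t) (ζ2 t)) ∈ 𝔖 k := by
    intro k ζ1 ζ2 h1 h2
    refine ⟨h1.1.inf h2.1, fun j hj t ht => ?_⟩
    exact le_trans (abs_min_le_max_abs _ _) (max_le (h1.2 j hj t ht) (h2.2 j hj t ht))
  have happrox : ∀ k (T : Finset ℝ), ∀ ε : ℝ, 0 < ε →
      ∃ ζ ∈ 𝔖 k, ∀ g ∈ T, ζ g ≤ u k g + ε := by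
    intro k T ε hε
    induction T using Finset.induction_on with
    | empty =>
      obtain ⟨ζ0, h0⟩ := h𝔖ne k
      exact ⟨ζ0, h0, by simp⟩
    | @insert a T ha ih =>
      obtain ⟨ζ1, hζ1, hζ1T⟩ := ih
      obtain ⟨z, hz, hza⟩ := Real.lt_sInf_add_pos (husetne k a) hε
      obtain ⟨ζ2, hζ2, rfl⟩ := hz
      refine ⟨fun t => min (ζ1 t) (ζ2 t), hmin𝔖 k ζ1 ζ2 hζ1 hζ2, fun g hg => ?_⟩
      rcases Finset.mem_insert.1 hg with rfl | hgT
      · exact le_trans (min_le_right _ _) hza.le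
      · exact le_trans (min_le_left _ _) (hζ1T g hgT)
  have hunif : ∀ k (ε : ℝ), 0 < ε → ∃ ζ ∈ 𝔖 k, ∀ t ∈ Icc x (w k), |ζ t - u k t| ≤ ε := by
    intro k ε hε
    obtain ⟨m, hm⟩ := exists_nat_gt (3 * (K k + 1) / ε)
    have hKk := hKnn k
    have hm0 : 0 < m := by
      have h3 : (0:ℝ) < 3 * (K k + 1) / ε := by positivity
      exact_mod_cast Nat.cast_pos.1 (lt_trans h3 hm)
    have hmR : (0:ℝ) < m := Nat.cast_pos.2 hm0
    have hKm : K k / m ≤ ε / 3 := by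
      rw [div_le_div_iff₀ hmR (by norm_num : (0:ℝ) < 3)]
      have h4 : 3 * (K k + 1) < ε * m := by
        rw [div_lt_iff₀ hε] at hm
        linarith
      linarith
    set T := (Finset.range (⌊(w k - x) * m⌋₊ + 1)).image (fun i : ℕ => x + i / m) with hT
    obtain ⟨ζ, hζ, hζT⟩ := happrox k T (ε/3) (by positivity)
    refine ⟨ζ, hζ, fun t ht => ?_⟩
    obtain ⟨i, hi, hgmem, hgt⟩ := grid_point m hm0 ht
    have hgT : x + i / m ∈ T := Finset.mem_image.2 ⟨i, Finset.mem_range.2 (by omega), rfl⟩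
    have hgIcc : x + i / m ∈ Icc x (w k) := ⟨hgmem.1, le_trans hgmem.2 ht.2⟩
    have hdist : |t - (x + i / m)| ≤ 1 / m := by
      rw [abs_of_nonneg (by linarith [hgmem.2])]
      exact hgt
    have h1 : |ζ t - ζ (x + i / m)| ≤ K k * |t - (x + i / m)| :=
      hlip k ζ hζ k le_rfl t ht _ hgIcc
    have h2 : |u k t - u k (x + i / m)| ≤ K k * |t - (x + i / m)| :=
      hu_lip k k le_rfl t ht _ hgIcc
    have h3 : ζ (x + i / m) ≤ u k (x + i / m) + ε / 3 := hζT _ hgT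
    have h4 : u k t ≤ ζ t := hu_le k ζ hζ t ht
    have hKd : K k * |t - (x + i / m)| ≤ ε / 3 := by
      refine le_trans (mul_le_mul_of_nonneg_left hdist (hKnn k)) ?_
      rw [mul_one_div]
      exact hKm
    have e1 := (abs_le.1 h1).2
    have e2 := (abs_le.1 h2).1
    rw [abs_le]
    constructor
    · linarith
    · linarith
  -- Step 7 : integral equations
  have hcontu : ∀ k, ContinuousOn (u k) (Icc x (w k)) :=
    fun k => continuousOn_of_lip (hu_lip k k le_rfl)
  have hζint : ∀ k (ζ : ℝ → ℝ), ζ ∈ 𝔖 k → ∀ t ∈ Icc x (w k),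
      ζ t = y + ∫ τ in x..t, F (τ, ζ τ) := by
    intro k ζ hζ t ht
    have := solOn_integral_eq (fun t' ht' => hζ.1.2 t' ht') t ht
    rwa [hζ.1.1] at this
  have hu_int : ∀ k, ∀ t ∈ Icc x (w k), u k t = y + ∫ τ in x..t, F (τ, u k τ) := by
    intro k t ht
    have key : ∀ ε : ℝ, 0 < ε → |u k t - (y + ∫ τ in x..t, F (τ, u k τ))| ≤ 0 + ε := by
      intro ε hε
      have hcomp : IsCompact (Icc x (w k) ×ˢ Icc (-B k) (B k)) := isCompact_Icc.prod isCompact_Icc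
      have hUC := hcomp.uniformContinuousOn_of_continuous F.continuous.continuousOn
      rw [Metric.uniformContinuousOn_iff] at hUC
      have hwkx : 0 < w k - x := by linarith [hxw k]
      have hε1 : 0 < ε / (2 * (w k - x) + 1) := by positivity
      obtain ⟨δ, hδ, hδ2⟩ := hUC _ hε1
      obtain ⟨ζ, hζ, hζu⟩ := hunif k (min (δ/2) (ε/2)) (by positivity)
      have hsub : Icc x t ⊆ Icc x (w k) := Icc_subset_Icc_right ht.2
      have hcontζ : ContinuousOn ζ (Icc x (w k)) := hζ.1.continuousOn
      have hgζ : ContinuousOn (fun τ => F (τ, ζ τ)) (Icc x t) :=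
        F.continuous.comp_continuousOn (continuousOn_id.prodMk (hcontζ.mono hsub))
      have hgu : ContinuousOn (fun τ => F (τ, u k τ)) (Icc x t) :=
        F.continuous.comp_continuousOn (continuousOn_id.prodMk ((hcontu k).mono hsub))
      have hiζ : IntervalIntegrable (fun τ => F (τ, ζ τ)) MeasureTheory.volume x t :=
        hgζ.intervalIntegrable_of_Icc ht.1
      have hiu : IntervalIntegrable (fun τ => F (τ, u k τ)) MeasureTheory.volume x t :=
        hgu.intervalIntegrable_of_Icc ht.1
      have heq := hζint k ζ hζ t ht
      have hptw : ∀ τ ∈ Set.uIoc x t, ‖F (τ, ζ τ) - F (τ, u k τ)‖ ≤ ε / (2 * (w k - x) + 1) := by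
        intro τ hτ
        have hτIcc : τ ∈ Icc x (w k) := by
          rw [Set.uIoc_of_le ht.1] at hτ
          exact ⟨hτ.1.le, le_trans hτ.2 ht.2⟩
        have hζτ : (τ, ζ τ) ∈ Icc x (w k) ×ˢ Icc (-B k) (B k) :=
          ⟨hτIcc, abs_le.1 (hζ.2 k le_rfl τ hτIcc)⟩
        have huτ : (τ, u k τ) ∈ Icc x (w k) ×ˢ Icc (-B k) (B k) :=
          ⟨hτIcc, abs_le.1 (hu_bound k k le_rfl τ hτIcc)⟩
        have hd : dist (τ, ζ τ) (τ, u k τ) < δ := by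
          rw [Prod.dist_eq]
          refine max_lt (by simpa using hδ) ?_
          rw [Real.dist_eq]
          exact lt_of_le_of_lt (le_trans (hζu τ hτIcc) (min_le_left _ _)) (by linarith)
        have := hδ2 _ hζτ _ huτ hd
        rw [Real.dist_eq] at this
        exact this.le
      have hintle : ‖∫ τ in x..t, (F (τ, ζ τ) - F (τ, u k τ))‖ ≤ (ε / (2 * (w k - x) + 1)) * |t - x| :=
        intervalIntegral.norm_integral_le_of_norm_le_const hptw
      rw [intervalIntegral.integral_sub hiζ hiu] at hintle
      have hζt := hζu t ht
      have htx : |t - x| ≤ w k - x := by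
        rw [abs_of_nonneg (by linarith [ht.1])]
        linarith [ht.2]
      have hfrac : (ε / (2 * (w k - x) + 1)) * |t - x| ≤ ε / 2 := by
        rw [div_mul_eq_mul_div, div_le_div_iff₀ (by linarith) (by norm_num)]
        nlinarith
      have habs1 := abs_le.1 hζt
      rw [Real.norm_eq_abs] at hintle
      have habs3 := abs_le.1 hintle
      have hζeq : ζ t - (y + ∫ τ in x..t, F (τ, ζ τ)) = 0 := by rw [heq]; ring
      have hmin1 : min (δ/2) (ε/2) ≤ ε/2 := min_le_right _ _
      rw [abs_le]
      constructor
      · have := habs3.1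
        have := habs1.1
        nlinarith [hζeq]
      · have := habs3.2
        have := habs1.2
        nlinarith [hζeq]
    have h0 := myle_of_forall_pos (a := |u k t - (y + ∫ τ in x..t, F (τ, u k τ))|) (fun ε hε => key ε hε)
    have : u k t - (y + ∫ τ in x..t, F (τ, u k τ)) = 0 := by
      have := abs_nonneg (u k t - (y + ∫ τ in x..t, F (τ, u k τ)))
      have habs : |u k t - (y + ∫ τ in x..t, F (τ, u k τ))| = 0 := le_antisymm h0 this
      exact abs_eq_zero.1 habs
    linarith
  -- Step 8 : monotonicity in k and the limit function U
  have hrestrict : ∀ {k k' : ℕ}, k ≤ k' → ∀ ζ ∈ 𝔖 k', ζ ∈ 𝔖 k := by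
    intro k k' hkk ζ hζ
    exact ⟨hζ.1.mono (Icc_subset_Icc_right (hwmono hkk)),
      fun j hj t ht => hζ.2 j (le_trans hj hkk) t ht⟩
  have hu_mono : ∀ {k k' : ℕ}, k ≤ k' → ∀ t ∈ Icc x (w k), u k t ≤ u k' t := by
    intro k k' hkk t ht
    exact hu_ge k' t (u k t) (fun ζ hζ => hu_le k ζ (hrestrict hkk ζ hζ) t ht)
  set U : ℝ → ℝ := fun t => sSup {z | ∃ k : ℕ, t ≤ w k ∧ z = u k t} with hUdef
  have hkex : ∀ t : ℝ, ∃ k : ℕ, t ≤ w k := by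
    intro t
    obtain ⟨k, hk⟩ := exists_nat_ge (t - x)
    refine ⟨k, ?_⟩
    simp only [hw]
    linarith
  have hUne : ∀ t, {z | ∃ k : ℕ, t ≤ w k ∧ z = u k t}.Nonempty := by
    intro t
    obtain ⟨k, hk⟩ := hkex t
    exact ⟨u k t, k, hk, rfl⟩
  have hUbdd : ∀ t, x ≤ t → ∀ j, t ≤ w j →
      ∀ z ∈ {z | ∃ k : ℕ, t ≤ w k ∧ z = u k t}, z ≤ B j := by
    intro t hxt j hj
    rintro z ⟨k, hk, rfl⟩
    rcases le_total k j with h | h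
    · exact le_trans (hu_mono h t ⟨hxt, hk⟩) ((abs_le.1 (hu_bound j j le_rfl t ⟨hxt, hj⟩)).2)
    · exact (abs_le.1 (hu_bound k j h t ⟨hxt, hj⟩)).2
  have hUbddA : ∀ t, x ≤ t → BddAbove {z | ∃ k : ℕ, t ≤ w k ∧ z = u k t} := by
    intro t hxt
    obtain ⟨j, hj⟩ := hkex t
    exact ⟨B j, hUbdd t hxt j hj⟩
  have hU_ge_u : ∀ (k : ℕ) t, x ≤ t → t ≤ w k → u k t ≤ U t :=
    fun k t hxt hk => le_csSup (hUbddA t hxt) ⟨k, hk, rfl⟩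
  have hU_bound : ∀ j, ∀ t ∈ Icc x (w j), |U t| ≤ B j := by
    intro j t ht
    rw [abs_le]
    constructor
    · have h1 := (abs_le.1 (hu_bound j j le_rfl t ht)).1
      exact le_trans h1 (hU_ge_u j t ht.1 ht.2)
    · exact csSup_le (hUne t) (hUbdd t ht.1 j ht.2)
  have hU_x : U x = y := by
    have hall : ∀ z ∈ {z | ∃ k : ℕ, x ≤ w k ∧ z = u k x}, z = y := by
      rintro z ⟨k, _, rfl⟩; exact hu_x k
    refine le_antisymm (csSup_le (hUne x) (fun z hz => (hall z hz).le)) ?_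
    obtain ⟨k0, hk0⟩ := hkex x
    have := le_csSup (hUbddA x le_rfl) ⟨k0, hk0, rfl⟩
    rwa [hu_x k0] at this
  have hU_approx : ∀ (j : ℕ) t, x ≤ t → t ≤ w j → ∀ ε : ℝ, 0 < ε →
      ∃ k0, j ≤ k0 ∧ ∀ k, k0 ≤ k → U t - ε < u k t ∧ u k t ≤ U t := by
    intro j t hxt hj ε hε
    obtain ⟨z, hzmem, hz⟩ := exists_lt_of_lt_csSup (hUne t) (show U t - ε < U t by linarith)
    obtain ⟨k1, hk1, rfl⟩ := hzmem
    refine ⟨max j k1, le_max_left _ _, fun k hk => ?_⟩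
    have hk1k : k1 ≤ k := le_trans (le_max_right _ _) hk
    have hjk : j ≤ k := le_trans (le_max_left _ _) hk
    constructor
    · exact lt_of_lt_of_le hz (hu_mono hk1k t ⟨hxt, hk1⟩)
    · exact hU_ge_u k t hxt (le_trans hj (hwmono hjk))
  have hU_lip : ∀ (j : ℕ), ∀ t1 ∈ Icc x (w j), ∀ t2 ∈ Icc x (w j),
      |U t1 - U t2| ≤ K j * |t1 - t2| := by
    intro j t1 ht1 t2 ht2
    have key : ∀ a ∈ Icc x (w j), ∀ b ∈ Icc x (w j), U a - U b ≤ K j * |a - b| := by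
      intro a ha b hb
      refine myle_of_forall_pos (fun ε hε => ?_)
      obtain ⟨k0, hjk0, hk0⟩ := hU_approx j a ha.1 ha.2 ε hε
      have h1 := (hk0 k0 le_rfl).1
      have h2 : u k0 b ≤ U b := hU_ge_u k0 b hb.1 (le_trans hb.2 (hwmono hjk0))
      have h3 := (abs_le.1 (hu_lip k0 j hjk0 a ha b hb)).2
      linarith
    have h1 := key t1 ht1 t2 ht2
    have h2 := key t2 ht2 t1 ht1
    rw [abs_sub_comm t2 t1] at h2
    exact abs_sub_le_iff.2 ⟨h1, h2⟩
  have hU_cont : ContinuousOn U (Ici x) := by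
    intro t ht
    obtain ⟨j, hj⟩ := hkex (t + 1)
    have htwj : t < w j := by linarith
    have hc1 : ContinuousOn U (Icc x (w j)) := continuousOn_of_lip (hU_lip j)
    have hcw : ContinuousWithinAt U (Icc x (w j)) t := hc1 t ⟨ht, htwj.le⟩
    have hmono : ContinuousWithinAt U (Ici x ∩ Iio (w j)) t :=
      hcw.mono (fun q hq => ⟨hq.1, hq.2.le⟩)
    exact (continuousWithinAt_inter (Iio_mem_nhds htwj)).1 hmono
  -- Step 9 : uniform convergence of u k to U on each window
  have hUunif : ∀ (j : ℕ) (ε : ℝ), 0 < ε → ∃ k0, j ≤ k0 ∧ ∀ k, k0 ≤ k →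
      ∀ t ∈ Icc x (w j), |U t - u k t| ≤ ε := by
    intro j ε hε
    obtain ⟨m, hm⟩ := exists_nat_gt (3 * (K j + 1) / ε)
    have hKj := hKnn j
    have hm0 : 0 < m := by
      have h3 : (0:ℝ) < 3 * (K j + 1) / ε := by positivity
      exact_mod_cast Nat.cast_pos.1 (lt_trans h3 hm)
    have hmR : (0:ℝ) < m := Nat.cast_pos.2 hm0
    have hKm : K j / m ≤ ε / 3 := by
      rw [div_le_div_iff₀ hmR (by norm_num : (0:ℝ) < 3)]
      have h4 : 3 * (K j + 1) < ε * m := by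
        rw [div_lt_iff₀ hε] at hm
        linarith
      linarith
    set p : ℕ → ℝ := fun i => x + min ((i : ℝ) / m) (w j - x) with hpdef
    have hp : ∀ i, p i ∈ Icc x (w j) := by
      intro i
      constructor
      · have : (0:ℝ) ≤ min ((i : ℝ) / m) (w j - x) :=
          le_min (by positivity) (by linarith [hxw j])
        simp only [hpdef]; linarith
      · have : min ((i : ℝ) / m) (w j - x) ≤ w j - x := min_le_right _ _
        simp only [hpdef]; linarith
    choose k0f hk0f using fun i : ℕ =>
      hU_approx j (p i) (hp i).1 (hp i).2 (ε/3) (by positivity)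
    set N := ⌊(w j - x) * m⌋₊ with hN
    set k0 := max j ((Finset.range (N+1)).sup k0f) with hk0def
    refine ⟨k0, le_max_left _ _, fun k hk t ht => ?_⟩
    have hjk : j ≤ k := le_trans (le_max_left _ _) hk
    obtain ⟨i, hi, hgm, hgt⟩ := grid_point m hm0 ht
    have hiq : (i : ℝ) / m ≤ w j - x := by
      have h5 : x + (i : ℝ) / m ≤ t := hgm.2
      have h6 := ht.2
      rw [le_sub_iff_add_le, add_comm]
      exact le_trans h5 h6
    have hpi : p i = x + (i : ℝ) / m := by
      simp only [hpdef]
      rw [min_eq_left hiq]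
    have hk0i : k0f i ≤ k :=
      le_trans (le_trans (Finset.le_sup (Finset.mem_range.2 (by omega))) (le_max_right _ _)) hk
    have h1 := (hk0f i |>.2 k hk0i).1
    have h2 := (hk0f i |>.2 k hk0i).2
    rw [hpi] at h1 h2
    have hgIcc : x + (i : ℝ) / m ∈ Icc x (w j) := by
      rw [← hpi]; exact hp i
    have hdist : |t - (x + (i : ℝ) / m)| ≤ 1 / m := by
      rw [abs_of_nonneg (by linarith [hgm.2])]
      exact hgt
    have hKd : K j * |t - (x + (i : ℝ) / m)| ≤ ε / 3 := by
      refine le_trans (mul_le_mul_of_nonneg_left hdist (hKnn j)) ?_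
      rw [mul_one_div]
      exact hKm
    have hL1 := abs_le.1 (hU_lip j t ht _ hgIcc)
    have hL2 := abs_le.1 (hu_lip k j hjk t ht _ hgIcc)
    have hle : u k t ≤ U t := hU_ge_u k t ht.1 (le_trans ht.2 (hwmono hjk))
    rw [abs_le]
    constructor
    · linarith
    · linarith [hL1.2, hL2.1]
  -- Step 10 : the integral equation for U
  have hU_int : ∀ t, x ≤ t → U t = y + ∫ τ in x..t, F (τ, U τ) := by
    intro t hxt
    obtain ⟨j, hj⟩ := hkex t
    have htj : t ∈ Icc x (w j) := ⟨hxt, hj⟩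
    have key : ∀ ε : ℝ, 0 < ε → |U t - (y + ∫ τ in x..t, F (τ, U τ))| ≤ 0 + ε := by
      intro ε hε
      have hcomp : IsCompact (Icc x (w j) ×ˢ Icc (-B j) (B j)) := isCompact_Icc.prod isCompact_Icc
      have hUC := hcomp.uniformContinuousOn_of_continuous F.continuous.continuousOn
      rw [Metric.uniformContinuousOn_iff] at hUC
      have hwkx : 0 < w j - x := by linarith [hxw j]
      have hε1 : 0 < ε / (2 * (w j - x) + 1) := by positivity
      obtain ⟨δ, hδ, hδ2⟩ := hUC _ hε1
      obtain ⟨k0, hjk0, hk0⟩ := hUunif j (min (δ/2) (ε/2)) (by positivity)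
      have htk0 : t ∈ Icc x (w k0) := ⟨hxt, le_trans hj (hwmono hjk0)⟩
      have heq := hu_int k0 t htk0
      have hsub : Icc x t ⊆ Icc x (w j) := Icc_subset_Icc_right hj
      have hsubk : Icc x t ⊆ Icc x (w k0) := Icc_subset_Icc_right htk0.2
      have hgU : ContinuousOn (fun τ => F (τ, U τ)) (Icc x t) :=
        F.continuous.comp_continuousOn (continuousOn_id.prodMk
          (hU_cont.mono (fun q hq => hq.1)))
      have hgu : ContinuousOn (fun τ => F (τ, u k0 τ)) (Icc x t) :=
        F.continuous.comp_continuousOn (continuousOn_id.prodMk ((hcontu k0).mono hsubk))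
      have hiU : IntervalIntegrable (fun τ => F (τ, U τ)) MeasureTheory.volume x t :=
        hgU.intervalIntegrable_of_Icc hxt
      have hiu : IntervalIntegrable (fun τ => F (τ, u k0 τ)) MeasureTheory.volume x t :=
        hgu.intervalIntegrable_of_Icc hxt
      have hptw : ∀ τ ∈ Set.uIoc x t, ‖F (τ, u k0 τ) - F (τ, U τ)‖ ≤ ε / (2 * (w j - x) + 1) := by
        intro τ hτ
        have hτIcc : τ ∈ Icc x (w j) := by
          rw [Set.uIoc_of_le hxt] at hτ
          exact ⟨hτ.1.le, le_trans hτ.2 hj⟩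
        have huτ : (τ, u k0 τ) ∈ Icc x (w j) ×ˢ Icc (-B j) (B j) :=
          ⟨hτIcc, abs_le.1 (hu_bound k0 j hjk0 τ hτIcc)⟩
        have hUτ : (τ, U τ) ∈ Icc x (w j) ×ˢ Icc (-B j) (B j) :=
          ⟨hτIcc, abs_le.1 (hU_bound j τ hτIcc)⟩
        have hd : dist (τ, u k0 τ) (τ, U τ) < δ := by
          rw [Prod.dist_eq]
          refine max_lt (by simpa using hδ) ?_
          rw [Real.dist_eq, abs_sub_comm]
          exact lt_of_le_of_lt (le_trans (hk0 k0 le_rfl τ hτIcc) (min_le_left _ _)) (by linarith)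
        have := hδ2 _ huτ _ hUτ hd
        rw [Real.dist_eq] at this
        exact this.le
      have hintle : ‖∫ τ in x..t, (F (τ, u k0 τ) - F (τ, U τ))‖ ≤ (ε / (2 * (w j - x) + 1)) * |t - x| :=
        intervalIntegral.norm_integral_le_of_norm_le_const hptw
      rw [intervalIntegral.integral_sub hiu hiU] at hintle
      have hUt := hk0 k0 le_rfl t htj
      have htx : |t - x| ≤ w j - x := by
        rw [abs_of_nonneg (by linarith)]
        linarith [htj.2]
      have hfrac : (ε / (2 * (w j - x) + 1)) * |t - x| ≤ ε / 2 := by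
        rw [div_mul_eq_mul_div, div_le_div_iff₀ (by linarith) (by norm_num)]
        nlinarith
      rw [Real.norm_eq_abs] at hintle
      have habs3 := abs_le.1 hintle
      have habs1 := abs_le.1 hUt
      have hueq : u k0 t - (y + ∫ τ in x..t, F (τ, u k0 τ)) = 0 := by rw [heq]; ring
      have hmin1 : min (δ/2) (ε/2) ≤ ε/2 := min_le_right _ _
      rw [abs_le]
      constructor
      · nlinarith [habs3.1, habs1.1, hueq]
      · nlinarith [habs3.2, habs1.2, hueq]
    have h0 := myle_of_forall_pos (a := |U t - (y + ∫ τ in x..t, F (τ, U τ))|) (fun ε hε => key ε hε)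
    have hzz : U t - (y + ∫ τ in x..t, F (τ, U τ)) = 0 := by
      have hnn := abs_nonneg (U t - (y + ∫ τ in x..t, F (τ, U τ)))
      exact abs_eq_zero.1 (le_antisymm h0 hnn)
    linarith
  -- Step 11 : U is a global solution
  set g : ℝ → ℝ := fun τ => F (τ, U (max τ x)) with hgdef
  have hUmaxcont : Continuous (fun τ : ℝ => U (max τ x)) :=
    hU_cont.comp_continuous (continuous_id.max continuous_const) (fun τ => mem_Ici.2 (le_max_right _ _))
  have hgcont : Continuous g := F.continuous.comp (continuous_id.prodMk hUmaxcont)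
  have hU_int2 : ∀ t ∈ Ici x, U t = y + ∫ τ in x..t, g τ := by
    intro t ht
    rw [hU_int t ht]
    congr 1
    apply intervalIntegral.integral_congr
    intro τ hτ
    rw [uIcc_of_le ht] at hτ
    simp only [hgdef]
    rw [max_eq_left hτ.1]
  have hderiv : ∀ t ∈ Ici x, HasDerivWithinAt U (F (t, U t)) (Ici x) t := by
    intro t ht
    have hFTC : HasDerivAt (fun t' => ∫ τ in x..t', g τ) (g t) t :=
      intervalIntegral.integral_hasDerivAt_right (hgcont.intervalIntegrable x t)
        (hgcont.stronglyMeasurableAtFilter _ _) hgcont.continuousAt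
    have h2 : HasDerivAt (fun t' => y + ∫ τ in x..t', g τ) (g t) t := hFTC.const_add y
    have h3 : HasDerivWithinAt U (g t) (Ici x) t :=
      (h2.hasDerivWithinAt).congr (fun t' ht' => hU_int2 t' ht') (hU_int2 t ht)
    have hval : g t = F (t, U t) := by
      simp only [hgdef]
      rw [max_eq_left ht]
    rwa [hval] at h3
  refine hG ⟨U, ?_, hU_x, ?_⟩
  · exact EReal.coe_lt_top x
  · rw [Dom_top]
    exact fun t ht => hderiv t ht
end
end

section
/- For every N ∈ ℕ, the sets A⁺_N and A⁻_N are Σ⁰₂ (i.e. countable unions of closed sets) subsets of C(ℝ²) × ℝ². -/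
open Set Filter Topology
open scoped Classical

noncomputable section

/-- A set is `Σ⁰₂` if it is a countable union of closed sets. -/
def IsSigma02 {X : Type*} [TopologicalSpace X] (A : Set X) : Prop :=
  ∃ C : ℕ → Set X, (∀ n, IsClosed (C n)) ∧ A = ⋃ n, C n

/-- A set is `Π⁰₃` if it is a countable intersection of `Σ⁰₂` sets. -/
def IsPi03 {X : Type*} [TopologicalSpace X] (A : Set X) : Prop :=
  ∃ S : ℕ → Set X, (∀ n, IsSigma02 (S n)) ∧ A = ⋂ n, S n

/-- A set is `Σ⁰₄` if it is a countable union of `Π⁰₃` sets. -/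
def IsSigma04 {X : Type*} [TopologicalSpace X] (A : Set X) : Prop :=
  ∃ P : ℕ → Set X, (∀ n, IsPi03 (P n)) ∧ A = ⋃ n, P n

/-- `A⁺_{N,h}`: the Cauchy problems with a solution having a vertical asymptote to `+∞`
at some `ξ > x + N` and bounded by `h` on `[x, x+N]`. -/
def Aplus (N h : ℕ) : Set (C(ℝ × ℝ, ℝ) × ℝ × ℝ) :=
  {p | ∃ (ξ : ℝ) (φ : ℝ → ℝ), p.2.1 + N < ξ ∧ SolPlus p.1 p.2.1 p.2.2 (ξ : EReal) φ ∧
    LimPlusTop φ (ξ : EReal) ∧ SupNormLe φ p.2.1 (p.2.1 + N) h}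

/-- `A⁻_{N,h}`: as `A⁺_{N,h}`, with `lim₊ φ = -∞` instead of `lim₊ φ = +∞`. -/
def Aminus (N h : ℕ) : Set (C(ℝ × ℝ, ℝ) × ℝ × ℝ) :=
  {p | ∃ (ξ : ℝ) (φ : ℝ → ℝ), p.2.1 + N < ξ ∧ SolPlus p.1 p.2.1 p.2.2 (ξ : EReal) φ ∧
    LimPlusBot φ (ξ : EReal) ∧ SupNormLe φ p.2.1 (p.2.1 + N) h}

/-- `A⁺_N`: the Cauchy problems with a solution having a vertical asymptote to `+∞`
at some `ξ > x + N`. -/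
def AplusN (N : ℕ) : Set (C(ℝ × ℝ, ℝ) × ℝ × ℝ) :=
  {p | ∃ (ξ : ℝ) (φ : ℝ → ℝ), p.2.1 + N < ξ ∧ SolPlus p.1 p.2.1 p.2.2 (ξ : EReal) φ ∧
    LimPlusTop φ (ξ : EReal)}

/-- `A⁻_N`: as `A⁺_N`, with `lim₊ φ = -∞` instead of `lim₊ φ = +∞`. -/
def AminusN (N : ℕ) : Set (C(ℝ × ℝ, ℝ) × ℝ × ℝ) :=
  {p | ∃ (ξ : ℝ) (φ : ℝ → ℝ), p.2.1 + N < ξ ∧ SolPlus p.1 p.2.1 p.2.2 (ξ : EReal) φ ∧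
    LimPlusBot φ (ξ : EReal)}

/-- `B^M_{N,h}`: the Cauchy problems with a solution defined (at least) on `[x, x+M]`
and bounded by `h` on `[x, x+N]`. -/
def Bset (M N h : ℕ) : Set (C(ℝ × ℝ, ℝ) × ℝ × ℝ) :=
  {p | ∃ (b : EReal) (φ : ℝ → ℝ), SolPlus p.1 p.2.1 p.2.2 b φ ∧
    ((p.2.1 + M : ℝ) : EReal) < b ∧ SupNormLe φ p.2.1 (p.2.1 + N) h}

-- ===================== auxiliary development =====================
namespace Stmt7

lemma dom_coe (x ξ : ℝ) : Dom x (ξ : EReal) = Ico x ξ := by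
  ext t
  simp only [Dom, mem_setOf_eq, mem_Ico, EReal.coe_lt_coe_iff]

lemma leftLim_coe (ξ : ℝ) : leftLim (ξ : EReal) = 𝓝[Iio ξ] ξ := by
  unfold leftLim
  rw [nhdsWithin, nhdsWithin, Filter.comap_inf, Filter.comap_principal,
    ← EReal.isEmbedding_coe.isInducing.nhds_eq_comap]
  have : ((↑) : ℝ → EReal) ⁻¹' (Iio (ξ : EReal)) = Iio ξ := by
    ext t; simp [EReal.coe_lt_coe_iff]
  rw [this]

lemma nebot_left (x ξ : ℝ) (hx : x < ξ) : (𝓝[Ico x ξ] ξ).NeBot := by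
  have h1 : (𝓝[Ioo x ξ] ξ).NeBot := right_nhdsWithin_Ioo_neBot hx
  exact h1.mono (nhdsWithin_mono ξ Ioo_subset_Ico_self)

/-- a solution blowing up to `+∞` at a finite time is non-extendible. -/
lemma solPlus_of_blowup {F : C(ℝ × ℝ, ℝ)} {x y ξ : ℝ} {φ : ℝ → ℝ}
    (h1 : PSol F x y (ξ : EReal) φ) (h2 : LimPlusTop φ (ξ : EReal)) :
    SolPlus F x y (ξ : EReal) φ := by
  refine ⟨h1, fun b' ψ hb' hagree hP => ?_⟩
  have hxξ : x < ξ := by exact_mod_cast h1.1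
  have hξdom : ξ ∈ Dom x b' := ⟨hxξ.le, hb'⟩
  have hct : ContinuousWithinAt ψ (Dom x b') ξ :=
    (hP.2.2 ξ hξdom).continuousWithinAt
  have hsub : Ico x ξ ⊆ Dom x b' := by
    intro t ht
    exact ⟨ht.1, lt_trans (by exact_mod_cast ht.2) hb'⟩
  have hct2 : Tendsto ψ (𝓝[Ico x ξ] ξ) (𝓝 (ψ ξ)) :=
    hct.mono_left (nhdsWithin_mono ξ hsub)
  haveI := nebot_left x ξ hxξ
  have hagree' : ∀ t ∈ Ico x ξ, ψ t = φ t := by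
    rw [dom_coe] at hagree; exact hagree
  have hφt : Tendsto φ (𝓝[Ico x ξ] ξ) (𝓝 (ψ ξ)) := by
    refine hct2.congr' ?_
    filter_upwards [self_mem_nhdsWithin] with t ht using hagree' t ht
  have hφtop : Tendsto φ (𝓝[Ico x ξ] ξ) atTop := by
    rw [LimPlusTop, leftLim_coe] at h2
    exact h2.mono_left (nhdsWithin_mono ξ (fun t (ht : t ∈ Ico x ξ) => ht.2))
  exact not_tendsto_atTop_of_tendsto_nhds hφt hφtop

/-- the symmetry `(F,x,y) ↦ (-F(·,-·), x, -y)`. -/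
def RefM : C(ℝ × ℝ, ℝ × ℝ) := ⟨fun q => (q.1, -q.2), by continuity⟩

def NegM : C(ℝ, ℝ) := ⟨fun v => -v, by continuity⟩

def TT : C(ℝ × ℝ, ℝ) × ℝ × ℝ → C(ℝ × ℝ, ℝ) × ℝ × ℝ :=
  fun p => (NegM.comp (p.1.comp RefM), p.2.1, -p.2.2)

lemma continuous_TT : Continuous TT := by
  refine Continuous.prodMk ?_ (Continuous.prodMk (by fun_prop) (by fun_prop))
  exact (ContinuousMap.continuous_postcomp NegM).comp
    ((ContinuousMap.continuous_precomp RefM).comp continuous_fst)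

lemma negconj_invol (G : C(ℝ × ℝ, ℝ)) :
    NegM.comp ((NegM.comp (G.comp RefM)).comp RefM) = G := by
  apply ContinuousMap.ext
  intro q
  simp [NegM, RefM, ContinuousMap.comp]

lemma PSol_neg {F : C(ℝ × ℝ, ℝ)} {x y : ℝ} {b : EReal} {φ : ℝ → ℝ} :
    PSol F x y b φ → PSol (NegM.comp (F.comp RefM)) x (-y) b (fun t => -φ t) := by
  rintro ⟨hxb, hxy, hd⟩
  refine ⟨hxb, by simp [hxy], fun t ht => ?_⟩
  have : HasDerivWithinAt (fun t => -φ t) (-F (t, φ t)) (Dom x b) t := (hd t ht).neg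
  convert this using 1
  simp [NegM, RefM]

lemma SolPlus_neg {F : C(ℝ × ℝ, ℝ)} {x y : ℝ} {b : EReal} {φ : ℝ → ℝ} :
    SolPlus F x y b φ → SolPlus (NegM.comp (F.comp RefM)) x (-y) b (fun t => -φ t) := by
  rintro ⟨hP, hmax⟩
  refine ⟨PSol_neg hP, fun b' ψ hb' hagree hP' => ?_⟩
  have h2 := PSol_neg hP'
  rw [neg_neg, negconj_invol] at h2
  exact hmax b' (fun t => -ψ t) hb' (fun t ht => by simp [hagree t ht]) h2

lemma mem_AminusN_iff {N : ℕ} (p : C(ℝ × ℝ, ℝ) × ℝ × ℝ) :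
    p ∈ AminusN N ↔ TT p ∈ AplusN N := by
  constructor
  · rintro ⟨ξ, φ, h1, h2, h3⟩
    refine ⟨ξ, fun t => -φ t, h1, SolPlus_neg h2, ?_⟩
    exact tendsto_neg_atTop_iff.mpr h3
  · rintro ⟨ξ, φ, h1, h2, h3⟩
    refine ⟨ξ, fun t => -φ t, h1, ?_, ?_⟩
    · have h4 := SolPlus_neg h2
      simp only [TT] at h4
      rw [neg_neg, negconj_invol] at h4
      exact h4
    · exact tendsto_neg_atTop_iff.mp (by simpa [LimPlusTop] using h3)


-- ===================== witness space =====================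

/-- levels -/
def lev (h m : ℕ) : ℝ := (h : ℝ) + m + 1

def reg (h m : ℕ) (x : ℝ) : Set (ℝ × ℝ) :=
  Icc (x - 1) (x + (h : ℝ) + 1) ×ˢ Icc (-(h : ℝ)) (lev h m)

lemma isCompact_reg (h m : ℕ) (x : ℝ) : IsCompact (reg h m x) :=
  isCompact_Icc.prod isCompact_Icc

lemma lev_nonneg (h m : ℕ) : 0 ≤ lev h m := by
  simp only [lev]; positivity

lemma neg_h_le_lev (h m : ℕ) : -(h:ℝ) ≤ lev h m := by
  have := lev_nonneg h m; have : (0:ℝ) ≤ h := Nat.cast_nonneg h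
  simp only [lev]; linarith

/-- sup of `|F|` on the region -/
def Mb (h m : ℕ) (F : C(ℝ × ℝ, ℝ)) (x : ℝ) : ℝ :=
  sSup ((fun z => |F z|) '' reg h m x)

lemma Mb_nonneg (h m : ℕ) (F : C(ℝ × ℝ, ℝ)) (x : ℝ) : 0 ≤ Mb h m F x := by
  refine Real.sSup_nonneg' ⟨|F (x - 1, -(h:ℝ))|, mem_image_of_mem _ ?_, abs_nonneg _⟩
  have hh : (0:ℝ) ≤ h := Nat.cast_nonneg h
  exact ⟨⟨le_refl _, by simp only []; linarith⟩, ⟨le_refl _, neg_h_le_lev h m⟩⟩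

lemma Mb_bddAbove (h m : ℕ) (F : C(ℝ × ℝ, ℝ)) (x : ℝ) :
    BddAbove ((fun z => |F z|) '' reg h m x) :=
  (isCompact_reg h m x).bddAbove_image (F.continuous.abs.continuousOn)

lemma le_Mb (h m : ℕ) (F : C(ℝ × ℝ, ℝ)) (x : ℝ) {z : ℝ × ℝ} (hz : z ∈ reg h m x) :
    |F z| ≤ Mb h m F x :=
  le_csSup (Mb_bddAbove h m F x) (mem_image_of_mem _ hz)

lemma mem_reg {h m : ℕ} {x : ℝ} {u v : ℝ} (h1 : x - 1 ≤ u) (h2 : u ≤ x + h + 1)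
    (h3 : -(h:ℝ) ≤ v) (h4 : v ≤ lev h m) : (u, v) ∈ reg h m x :=
  ⟨⟨h1, h2⟩, ⟨h3, h4⟩⟩

/-- witness space -/
abbrev Wsp (h : ℕ) : Type :=
  ((m : ℕ) → ℝ → Icc (-(h : ℝ)) (lev h m)) × (ℕ → Icc (0 : ℝ) (h : ℝ))

example (h : ℕ) : CompactSpace (Wsp h) := inferInstance

/-- the conditions -/
def SC (N h : ℕ) (F : C(ℝ × ℝ, ℝ)) (x y : ℝ)
    (Ψ : (m : ℕ) → ℝ → Icc (-(h : ℝ)) (lev h m)) (σ : ℕ → Icc (0 : ℝ) (h : ℝ)) : Prop :=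
  (∀ m, (N : ℝ) ≤ σ m) ∧
  (∀ m, (σ m : ℝ) ≤ σ (m + 1)) ∧
  (∀ m, (Ψ m x : ℝ) = y) ∧
  (∀ m, (Ψ m (x + σ m) : ℝ) = lev h m) ∧
  (∀ m t, (Ψ m t : ℝ) = Ψ m (max x (min t (x + σ m)))) ∧
  (∀ m, ∀ t ∈ Icc x (x + (N : ℝ)), (Ψ m t : ℝ) ≤ h) ∧
  (∀ m, ∀ t ∈ Icc x (x + (σ m : ℝ)), (Ψ (m + 1) t : ℝ) = Ψ m t) ∧
  (∀ m t t', |(Ψ m t : ℝ) - (Ψ m t' : ℝ)| ≤ (Mb h m F x + 1) * |t - t'|) ∧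
  (∀ m, ∀ t ∈ Icc x (x + (σ m : ℝ)), (Ψ m t : ℝ) = y + ∫ s in x..t, F (s, (Ψ m s : ℝ)))

def Scond (N h : ℕ) : Set ((C(ℝ × ℝ, ℝ) × ℝ × ℝ) × Wsp h) :=
  {z | SC N h z.1.1 z.1.2.1 z.1.2.2 z.2.1 z.2.2}

-- ===================== reconstruction =====================

lemma lev_lt_succ (h m : ℕ) : lev h m < lev h (m+1) := by
  simp only [lev]; push_cast; linarith

lemma recon {N h : ℕ} {F : C(ℝ × ℝ, ℝ)} {x y : ℝ}
    {Ψ : (m : ℕ) → ℝ → Icc (-(h : ℝ)) (lev h m)} {σ : ℕ → Icc (0 : ℝ) (h : ℝ)}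
    (hs : SC N h F x y Ψ σ) : (F, x, y) ∈ AplusN N := by
  obtain ⟨hA1, hA2, hB1, hB2, hC, hD, hE, hFl, hG⟩ := hs
  set ψ : ℕ → ℝ → ℝ := fun m t => (Ψ m t : ℝ) with hψdef
  set tm : ℕ → ℝ := fun m => x + σ m with htmdef
  have h_x_le : ∀ m, x ≤ tm m := fun m => le_add_of_nonneg_right (σ m).2.1
  have h_xN_le : ∀ m, x + (N:ℝ) ≤ tm m := fun m => by
    have := hA1 m; simp only [htmdef]; linarith
  have h_tm_mono : Monotone tm := monotone_nat_of_le_succ fun m => by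
    have := hA2 m; simp only [htmdef]; linarith
  -- values for t ≤ x
  have hlow : ∀ m t, t ≤ x → ψ m t = y := by
    intro m t ht
    have h1 := hC m t
    rw [min_eq_left (le_trans ht (h_x_le m)), max_eq_left ht] at h1
    rw [hψdef]; simp only []
    rw [h1]; exact hB1 m
  -- consistency
  have h_cons : ∀ m m', m ≤ m' → ∀ t, t ≤ tm m → ψ m' t = ψ m t := by
    intro m m' hmm'
    induction m' , hmm' using Nat.le_induction with
    | base => intro t _; rfl
    | succ m' hmm' ih =>
      intro t ht
      rcases le_or_gt t x with htx | hxt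
      · rw [hlow _ t htx, hlow _ t htx]
      · have ht' : t ≤ tm m' := le_trans ht (h_tm_mono hmm')
        have := hE m' t ⟨hxt.le, ht'⟩
        rw [hψdef]; simp only []
        rw [this]
        exact ih t ht
  -- strict monotonicity of the crossing times
  have h_tm_strict : ∀ m, tm m < tm (m+1) := by
    intro m
    rcases lt_or_ge (tm m) (tm (m+1)) with hlt | hle
    · exact hlt
    · exfalso
      have heq : tm (m+1) = tm m := le_antisymm hle (h_tm_mono (Nat.le_succ m))
      have h1 : ψ (m+1) (tm m) = ψ m (tm m) := hE m (tm m) ⟨h_x_le m, le_refl _⟩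
      have h2 : ψ m (tm m) = lev h m := hB2 m
      have h3 : ψ (m+1) (tm (m+1)) = lev h (m+1) := hB2 (m+1)
      rw [heq, h1, h2] at h3
      exact absurd h3 (ne_of_lt (lev_lt_succ h m))
  have h_bdd : BddAbove (range tm) := by
    refine ⟨x + h, ?_⟩
    rintro v ⟨m, rfl⟩
    have := (σ m).2.2
    simp only [htmdef]; linarith
  set τ : ℝ := ⨆ m, tm m with hτdef
  have h_tm_le_τ : ∀ m, tm m ≤ τ := fun m => le_ciSup h_bdd m
  have h_tm_lt_τ : ∀ m, tm m < τ := fun m =>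
    lt_of_lt_of_le (h_tm_strict m) (h_tm_le_τ (m+1))
  have h_τ_le : τ ≤ x + h := ciSup_le fun m => by
    have := (σ m).2.2; simp only [htmdef]; linarith
  have h_τ_gt : x + (N:ℝ) < τ := lt_of_le_of_lt (h_xN_le 0) (h_tm_lt_τ 0)
  have h_x_lt_τ : x < τ := lt_of_le_of_lt (le_add_of_nonneg_right (Nat.cast_nonneg N)) h_τ_gt
  -- continuity of the pieces
  have hψcont : ∀ m, Continuous (ψ m) := by
    intro m
    refine LipschitzWith.continuous (K := Real.toNNReal (Mb h m F x + 1)) ?_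
    refine LipschitzWith.of_dist_le_mul fun t t' => ?_
    rw [Real.dist_eq, Real.dist_eq, Real.coe_toNNReal _ (by linarith [Mb_nonneg h m F x])]
    exact hFl m t t'
  -- the glued solution
  have hex_all : ∀ t, t < τ → ∃ m, t < tm m := fun t ht => exists_lt_of_lt_ciSup ht
  set φ : ℝ → ℝ := fun t => if hm : ∃ m, t ≤ tm m then ψ (Nat.find hm) t else 0 with hφdef
  have hφeq : ∀ m t, t ≤ tm m → φ t = ψ m t := by
    intro m t ht
    have hex : ∃ m', t ≤ tm m' := ⟨m, ht⟩
    rw [hφdef]; simp only []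
    rw [dif_pos hex]
    exact (h_cons (Nat.find hex) m (Nat.find_min' hex ht) t (Nat.find_spec hex)).symm
  have hφx : φ x = y := by rw [hφeq 0 x (h_x_le 0)]; exact hB1 0
  have hφtm : ∀ m, φ (tm m) = lev h m := fun m => by
    rw [hφeq m (tm m) (le_refl _)]; exact hB2 m
  -- the ODE
  have hDom : Dom x (τ : EReal) = Ico x τ := dom_coe x τ
  have hderiv : ∀ t₀ ∈ Dom x (τ:EReal), HasDerivWithinAt φ (F (t₀, φ t₀)) (Dom x (τ:EReal)) t₀ := by
    intro t₀ ht₀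
    rw [hDom] at ht₀ ⊢
    obtain ⟨m, hm⟩ := hex_all t₀ ht₀.2
    set g : ℝ → ℝ := fun s => F (s, ψ m s) with hgdef
    have hg : Continuous g := F.continuous.comp (continuous_id.prodMk (hψcont m))
    set I : ℝ → ℝ := fun u => y + ∫ s in x..u, g s with hIdef
    have hI : HasDerivAt I (g t₀) t₀ := by
      refine HasDerivAt.const_add y ?_
      exact intervalIntegral.integral_hasDerivAt_right (hg.intervalIntegrable _ _)
        (hg.stronglyMeasurableAtFilter _ _) hg.continuousAt
    have heqI : ∀ u ∈ Icc x (tm m), φ u = I u := by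
      intro u hu
      rw [hφeq m u hu.2, hIdef]
      exact hG m u hu
    have hIw : HasDerivWithinAt I (g t₀) (Ico x τ) t₀ := hI.hasDerivWithinAt
    have hEv : φ =ᶠ[𝓝[Ico x τ] t₀] I := by
      filter_upwards [nhdsWithin_le_nhds (Iio_mem_nhds hm), self_mem_nhdsWithin] with u hu1 hu2
      exact heqI u ⟨hu2.1, le_of_lt hu1⟩
    have ht₀m : t₀ ∈ Icc x (tm m) := ⟨ht₀.1, hm.le⟩
    have := hIw.congr_of_eventuallyEq hEv (heqI t₀ ht₀m)
    have hval : g t₀ = F (t₀, φ t₀) := by rw [hφeq m t₀ hm.le]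
    rwa [hval] at this
  have hPSol : PSol F x y (τ : EReal) φ := ⟨by exact_mod_cast h_x_lt_τ, hφx, hderiv⟩
  -- blow-up
  have hblow : LimPlusTop φ (τ : EReal) := by
    rw [LimPlusTop, leftLim_coe, tendsto_atTop]
    intro A
    -- the band constant
    set Q : Set (ℝ × ℝ) := Icc (x-1) (x + (h:ℝ) + 1) ×ˢ Icc A (A+1) with hQdef
    set MA : ℝ := sSup ((fun z => |F z|) '' Q) + 1 with hMAdef
    have hMA1 : 1 ≤ MA := by
      rw [hMAdef]
      have : (0:ℝ) ≤ sSup ((fun z => |F z|) '' Q) := by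
        refine Real.sSup_nonneg' ⟨|F (x-1, A)|, mem_image_of_mem _ ?_, abs_nonneg _⟩
        constructor
        · constructor
          · exact le_refl _
          · simp only []; have : (0:ℝ) ≤ h := Nat.cast_nonneg h; linarith
        · exact ⟨le_refl _, by linarith⟩
      linarith
    have hMA0 : 0 < MA := by linarith
    have hbddQ : BddAbove ((fun z => |F z|) '' Q) :=
      (isCompact_Icc.prod isCompact_Icc).bddAbove_image F.continuous.abs.continuousOn
    have hFQ : ∀ z ∈ Q, |F z| ≤ MA - 1 := by
      intro z hz
      have := le_csSup hbddQ (mem_image_of_mem (fun z => |F z|) hz)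
      rw [hMAdef]; linarith
    have h_tm_tendsto : Tendsto tm atTop (𝓝 τ) := tendsto_atTop_ciSup h_tm_mono h_bdd
    have hev1 : ∀ᶠ m in atTop, τ - 1/MA < tm m := by
      refine h_tm_tendsto.eventually ?_
      refine eventually_gt_nhds ?_
      have : 0 < 1/MA := by positivity
      linarith
    have hev2 : ∀ᶠ m in (atTop : Filter ℕ), A + 2 ≤ lev h m := by
      have : Tendsto (fun m : ℕ => lev h m) atTop atTop := by
        simp only [lev]
        exact tendsto_atTop_add_const_right _ 1
          (tendsto_atTop_add_const_left _ _ tendsto_natCast_atTop_atTop)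
      exact this.eventually_ge_atTop (A+2)
    obtain ⟨m, hm1, hm2⟩ := (hev1.and hev2).exists
    -- on [tm m, τ), φ ≥ A
    have hIoo : Ioo (tm m) τ ∈ 𝓝[Iio τ] τ := Ioo_mem_nhdsLT_of_mem ⟨h_tm_lt_τ m, le_refl _⟩
    filter_upwards [hIoo] with t ht
    by_contra hcon
    push_neg at hcon
    -- the continuous representative on [x, tm m']
    obtain ⟨m₁, hm₁⟩ := hex_all t ht.2
    set m' : ℕ := max m₁ m with hm'def
    have htm' : t ≤ tm m' := le_trans hm₁.le (h_tm_mono (le_max_left _ _))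
    have htmm' : tm m ≤ tm m' := h_tm_mono (le_max_right _ _)
    set f : ℝ → ℝ := ψ m' with hfdef
    have hfφ : ∀ u, u ≤ tm m' → f u = φ u := fun u hu => (hφeq m' u hu).symm
    have hfcont : Continuous f := hψcont m'
    have hf_tm : f (tm m) = lev h m := by rw [hfφ (tm m) htmm', hφtm m]
    have hf_t : f t < A := by rw [hfφ t htm']; exact hcon
    have htmt : tm m ≤ t := ht.1.le
    -- last crossing of A+1
    set Sc : Set ℝ := Icc (tm m) t ∩ {u | f u = A + 1} with hScdef
    have hScne : Sc.Nonempty := by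
      have hsub := intermediate_value_Icc' htmt hfcont.continuousOn
      have : A + 1 ∈ Icc (f t) (f (tm m)) := by
        rw [hf_tm]; exact ⟨by linarith, by linarith⟩
      obtain ⟨u, hu1, hu2⟩ := hsub this
      exact ⟨u, hu1, hu2⟩
    have hSccpt : IsCompact Sc :=
      isCompact_Icc.inter_right (isClosed_singleton.preimage hfcont)
    set c : ℝ := sSup Sc with hcdef
    have hcmem : c ∈ Sc := hSccpt.sSup_mem hScne
    have hfc : f c = A + 1 := hcmem.2
    have hct : c < t := by
      rcases lt_or_eq_of_le hcmem.1.2 with hlt | heq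
      · exact hlt
      · exfalso; rw [heq] at hfc; linarith [hf_t, hfc]
    have hclast : ∀ u, u ∈ Ioc c t → f u < A + 1 := by
      intro u hu
      rcases lt_trichotomy (f u) (A+1) with h1 | h1 | h1
      · exact h1
      · exfalso
        have : u ∈ Sc := ⟨⟨le_trans hcmem.1.1 hu.1.le, hu.2⟩, h1⟩
        exact absurd (le_csSup hSccpt.bddAbove this) (not_le.mpr hu.1)
      · exfalso
        have hsub := intermediate_value_Icc' hu.2 hfcont.continuousOn
        have : A + 1 ∈ Icc (f t) (f u) := ⟨by linarith, by linarith⟩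
        obtain ⟨w, hw1, hw2⟩ := hsub this
        have hwc : w ∈ Sc := ⟨⟨le_trans hcmem.1.1 (le_trans hu.1.le hw1.1), hw1.2⟩, hw2⟩
        have : w ≤ c := le_csSup hSccpt.bddAbove hwc
        have : c < w := lt_of_lt_of_le hu.1 hw1.1
        linarith
    -- first crossing of A after c
    set Sd : Set ℝ := Icc c t ∩ {u | f u = A} with hSddef
    have hSdne : Sd.Nonempty := by
      have hsub := intermediate_value_Icc' hct.le hfcont.continuousOn
      have : A ∈ Icc (f t) (f c) := ⟨by linarith, by rw [hfc]; linarith⟩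
      obtain ⟨u, hu1, hu2⟩ := hsub this
      exact ⟨u, hu1, hu2⟩
    have hSdcpt : IsCompact Sd :=
      isCompact_Icc.inter_right (isClosed_singleton.preimage hfcont)
    set d : ℝ := sInf Sd with hddef
    have hdmem : d ∈ Sd := hSdcpt.sInf_mem hSdne
    have hfd : f d = A := hdmem.2
    have hcd : c < d := by
      rcases lt_or_eq_of_le hdmem.1.1 with hlt | heq
      · exact hlt
      · exfalso; rw [← heq] at hfd; rw [hfc] at hfd; linarith
    have hdt : d ≤ t := hdmem.1.2
    have hfirst : ∀ u, u ∈ Ico c d → A < f u := by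
      intro u hu
      rcases lt_trichotomy A (f u) with h1 | h1 | h1
      · exact h1
      · exfalso
        have : u ∈ Sd := ⟨⟨hu.1, le_trans hu.2.le hdt⟩, h1.symm⟩
        exact absurd (csInf_le hSdcpt.bddBelow this) (not_le.mpr hu.2)
      · exfalso
        have hsub := intermediate_value_Icc' hu.1 hfcont.continuousOn
        have : A ∈ Icc (f u) (f c) := ⟨by linarith, by rw [hfc]; linarith⟩
        obtain ⟨w, hw1, hw2⟩ := hsub this
        have hwd : w ∈ Sd := ⟨⟨hw1.1, le_trans hw1.2 (le_trans hu.2.le hdt)⟩, hw2⟩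
        have hdw : d ≤ w := csInf_le hSdcpt.bddBelow hwd
        have : w ≤ u := hw1.2
        have : u < d := hu.2
        linarith
    -- band bounds on [c, d]
    have hband : ∀ u ∈ Icc c d, A ≤ f u ∧ f u ≤ A + 1 := by
      intro u hu
      constructor
      · rcases eq_or_lt_of_le hu.2 with he | hl
        · rw [he, hfd]
        · exact (hfirst u ⟨hu.1, hl⟩).le
      · rcases eq_or_lt_of_le hu.1 with he | hl
        · rw [← he, hfc]
        · exact (hclast u ⟨hl, le_trans hu.2 hdt⟩).le
    have hIccsub : Icc c d ⊆ Ico x τ := fun u hu =>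
      ⟨le_trans (le_trans (h_x_le m) hcmem.1.1) hu.1,
        lt_of_le_of_lt (le_trans hu.2 hdt) ht.2⟩
    have hder2 : ∀ u ∈ Icc c d, HasDerivWithinAt f (F (u, f u)) (Icc c d) u := by
      intro u hu
      have h1 := hderiv u (by rw [hDom]; exact hIccsub hu)
      rw [hDom] at h1
      have h2 : HasDerivWithinAt φ (F (u, φ u)) (Icc c d) u := h1.mono hIccsub
      have hu' : u ≤ tm m' := le_trans (le_trans hu.2 hdt) htm'
      have h3 := h2.congr (fun v hv => hfφ v (le_trans (le_trans hv.2 hdt) htm')) (hfφ u hu')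
      rwa [← hfφ u hu'] at h3
    have hbound : ∀ u ∈ Icc c d, ‖F (u, f u)‖ ≤ MA - 1 := by
      intro u hu
      have hu2 := hband u hu
      rw [Real.norm_eq_abs]
      refine hFQ (u, f u) ⟨⟨?_, ?_⟩, ⟨hu2.1, hu2.2⟩⟩
      · have h1 : x ≤ tm m := h_x_le m
        have h2 : tm m ≤ c := hcmem.1.1
        simp only []
        linarith [hu.1]
      · have h1 : u ≤ t := le_trans hu.2 hdt
        have h2 : t < τ := ht.2
        have hh : (0:ℝ) ≤ h := Nat.cast_nonneg h
        simp only []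
        linarith [h_τ_le]
    have hMVT := Convex.norm_image_sub_le_of_norm_hasDerivWithin_le hder2 hbound
      (convex_Icc c d) (left_mem_Icc.mpr hcd.le) (right_mem_Icc.mpr hcd.le)
    rw [hfd, hfc, Real.norm_eq_abs, Real.norm_eq_abs] at hMVT
    have habs1 : |A - (A + 1)| = 1 := by
      rw [abs_of_nonpos (by linarith)]; ring
    have habs2 : |d - c| = d - c := abs_of_nonneg (by linarith)
    rw [habs1, habs2] at hMVT
    have hdc : d - c < 1 / MA := by
      have h1 : tm m ≤ c := hcmem.1.1
      have h2 : d ≤ t := hdt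
      have h3 : t < τ := ht.2
      clear_value d c MA τ tm
      linarith only [hm1, h1, h2, h3]
    have hmul : (MA - 1) * (d - c) ≤ (MA - 1) * (1 / MA) :=
      mul_le_mul_of_nonneg_left hdc.le (by linarith)
    have heq2 : (MA - 1) * (1 / MA) = 1 - 1 / MA := by field_simp
    have hpos : 0 < 1 / MA := by positivity
    clear_value d c MA τ tm
    linarith only [hMVT, hmul, heq2, hpos]
  exact ⟨τ, φ, h_τ_gt, solPlus_of_blowup hPSol hblow, hblow⟩

-- ===================== clamp lemmas =====================

lemma clamp_mem {a b : ℝ} (hab : a ≤ b) (t : ℝ) : max a (min t b) ∈ Icc a b :=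
  ⟨le_max_left _ _, max_le hab (min_le_right _ _)⟩

lemma clamp_eq_self {a b t : ℝ} (h1 : a ≤ t) (h2 : t ≤ b) : max a (min t b) = t := by
  rw [min_eq_left h2, max_eq_right h1]

lemma clamp_idem {a b : ℝ} (hab : a ≤ b) (t : ℝ) :
    max a (min (max a (min t b)) b) = max a (min t b) := by
  have := clamp_mem hab t
  exact clamp_eq_self this.1 this.2

lemma clamp_lip {a b : ℝ} (t t' : ℝ) :
    |max a (min t b) - max a (min t' b)| ≤ |t - t'| := by
  have h1 : |max a (min t b) - max a (min t' b)| ≤ |min t b - min t' b| := by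
    rw [max_comm a (min t b), max_comm a (min t' b)]
    exact abs_max_sub_max_le_abs _ _ _
  have h2 : |min t b - min t' b| ≤ max |t - t'| |b - b| := abs_min_sub_min_le_max t b t' b
  simp only [sub_self, abs_zero] at h2
  exact le_trans h1 (le_trans h2 (sup_le (le_refl _) (abs_nonneg _)))

-- ===================== soundness =====================

lemma sound {N : ℕ} {F : C(ℝ × ℝ, ℝ)} {x y : ℝ} (hp : (F, x, y) ∈ AplusN N) :
    ∃ h : ℕ, ∃ w : Wsp h, SC N h F x y w.1 w.2 := by
  obtain ⟨ξ, φ, hξ, hSolP, hTopE⟩ := hp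
  have hP := hSolP.1
  have hxlt : x < ξ := by exact_mod_cast hP.1
  have hφx : φ x = y := hP.2.1
  have hd : ∀ t ∈ Ico x ξ, HasDerivWithinAt φ (F (t, φ t)) (Ico x ξ) t := by
    rw [← dom_coe]; exact hP.2.2
  have hcont : ContinuousOn φ (Ico x ξ) := fun t ht => (hd t ht).continuousWithinAt
  have hTop : Tendsto φ (𝓝[Iio ξ] ξ) atTop := by
    rw [LimPlusTop, leftLim_coe] at hTopE; exact hTopE
  have hxNξ : x + (N:ℝ) < ξ := by exact_mod_cast hξ
  -- lower bound
  have h0 : {t | 0 ≤ φ t} ∈ 𝓝[Iio ξ] ξ := hTop.eventually_ge_atTop 0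
  obtain ⟨l, hl, hlsub⟩ := (mem_nhdsLT_iff_exists_Ioo_subset' hxlt).mp h0
  set u : ℝ := max l x with hudef
  have hu_lt : u < ξ := max_lt hl hxlt
  have hu_ge : x ≤ u := le_max_right _ _
  obtain ⟨z₀, hz₀mem, hz₀min⟩ := isCompact_Icc.exists_isMinOn (nonempty_Icc.mpr hu_ge)
    (hcont.mono (fun v hv => ⟨hv.1, lt_of_le_of_lt hv.2 hu_lt⟩))
  set L : ℝ := min (φ z₀) 0 with hLdef
  have hLbound : ∀ t ∈ Ico x ξ, L ≤ φ t := by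
    intro t ht
    rcases le_total t u with htu | htu
    · exact le_trans (min_le_left _ _) (hz₀min ⟨ht.1, htu⟩)
    · rcases eq_or_lt_of_le htu with he | hlt
      · exact le_trans (min_le_left _ _) (hz₀min ⟨ht.1, he.ge⟩)
      · refine le_trans (min_le_right _ _) (hlsub ⟨lt_of_le_of_lt (le_max_left l x) hlt, ht.2⟩)
  -- upper bound on the compact initial segment
  have hIccN : Icc x (x + (N:ℝ)) ⊆ Ico x ξ := fun v hv => ⟨hv.1, lt_of_le_of_lt hv.2 hxNξ⟩
  obtain ⟨z₁, hz₁mem, hz₁max⟩ := isCompact_Icc.exists_isMaxOn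
    (nonempty_Icc.mpr (le_add_of_nonneg_right (Nat.cast_nonneg N)))
    ((hcont.mono hIccN).abs)
  set U : ℝ := |φ z₁| with hUdef
  have hUbound : ∀ t ∈ Icc x (x + (N:ℝ)), |φ t| ≤ U := fun t ht => hz₁max ht
  -- choose h
  obtain ⟨h, hh⟩ := exists_nat_ge (max (ξ - x) (max (-L) U))
  have hh1 : ξ - x ≤ h := le_trans (le_max_left _ _) hh
  have hh2 : -(h:ℝ) ≤ L := by
    have := le_trans (le_trans (le_max_left _ _) (le_max_right (ξ - x) _)) hh
    linarith
  have hh3 : U ≤ h := le_trans (le_trans (le_max_right _ _) (le_max_right (ξ - x) _)) hh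
  have hy : |y| ≤ h := by
    rw [← hφx]
    exact le_trans (hUbound x ⟨le_refl _, le_add_of_nonneg_right (Nat.cast_nonneg N)⟩) hh3
  -- points where φ is large
  have hum : ∀ m : ℕ, ∃ v, x ≤ v ∧ v < ξ ∧ lev h m ≤ φ v := by
    intro m
    have := hTop.eventually_ge_atTop (lev h m)
    obtain ⟨a, ha, hasub⟩ := (mem_nhdsLT_iff_exists_Ioo_subset' hxlt).mp this
    obtain ⟨v, hv1, hv2⟩ := exists_between (show max a x < ξ from max_lt ha hxlt)
    exact ⟨v, le_trans (le_max_right _ _) hv1.le, hv2,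
      hasub ⟨lt_of_le_of_lt (le_max_left _ _) hv1, hv2⟩⟩
  choose um hum1 hum2 hum3 using hum
  -- first crossing times
  have hTsetfacts : ∀ m : ℕ, ∃ c, (c ∈ Icc x (um m) ∧ φ c = lev h m) ∧
      ∀ v, x ≤ v → v < c → φ v < lev h m := by
    intro m
    have hylev : y < lev h m := by
      have := abs_le.mp hy
      simp only [lev]; push_cast; linarith [this.2]
    have hsubIco : Icc x (um m) ⊆ Ico x ξ := fun v hv => ⟨hv.1, lt_of_le_of_lt hv.2 (hum2 m)⟩
    have hcIcc : ContinuousOn φ (Icc x (um m)) := hcont.mono hsubIco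
    have hTne : (Icc x (um m) ∩ φ ⁻¹' {lev h m}).Nonempty := by
      have hsub := intermediate_value_Icc (hum1 m) hcIcc
      have : lev h m ∈ Icc (φ x) (φ (um m)) := ⟨by rw [hφx]; exact hylev.le, hum3 m⟩
      obtain ⟨v, hv1, hv2⟩ := hsub this
      exact ⟨v, hv1, hv2⟩
    have hTclosed : IsClosed (Icc x (um m) ∩ φ ⁻¹' {lev h m}) :=
      hcIcc.preimage_isClosed_of_isClosed isClosed_Icc isClosed_singleton
    have hTcpt : IsCompact (Icc x (um m) ∩ φ ⁻¹' {lev h m}) :=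
      isCompact_Icc.of_isClosed_subset hTclosed inter_subset_left
    set c : ℝ := sInf (Icc x (um m) ∩ φ ⁻¹' {lev h m}) with hcdef
    have hcmem := hTcpt.sInf_mem hTne
    refine ⟨c, ⟨hcmem.1, hcmem.2⟩, fun v hv1 hv2 => ?_⟩
    rcases lt_trichotomy (φ v) (lev h m) with h1 | h1 | h1
    · exact h1
    · exfalso
      have : v ∈ Icc x (um m) ∩ φ ⁻¹' {lev h m} :=
        ⟨⟨hv1, le_trans hv2.le hcmem.1.2⟩, h1⟩
      exact absurd (csInf_le hTcpt.bddBelow this) (not_le.mpr hv2)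
    · exfalso
      have hsub := intermediate_value_Icc hv1 (hcIcc.mono (fun w hw =>
        ⟨hw.1, le_trans hw.2 (le_trans hv2.le hcmem.1.2)⟩))
      have : lev h m ∈ Icc (φ x) (φ v) := ⟨by rw [hφx]; exact hylev.le, h1.le⟩
      obtain ⟨w, hw1, hw2⟩ := hsub this
      have : w ∈ Icc x (um m) ∩ φ ⁻¹' {lev h m} :=
        ⟨⟨hw1.1, le_trans hw1.2 (le_trans hv2.le hcmem.1.2)⟩, hw2⟩
      have := csInf_le hTcpt.bddBelow this
      have : w < c := lt_of_le_of_lt hw1.2 hv2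
      linarith [csInf_le hTcpt.bddBelow ‹w ∈ _›]
  choose tc htc1 htc2 using hTsetfacts
  have htcval : ∀ m, φ (tc m) = lev h m := fun m => (htc1 m).2
  have htcx : ∀ m, x ≤ tc m := fun m => (htc1 m).1.1
  have htclt : ∀ m, tc m < ξ := fun m => lt_of_le_of_lt (htc1 m).1.2 (hum2 m)
  have htcfirst : ∀ m, ∀ v, x ≤ v → v < tc m → φ v < lev h m := htc2
  have htcN : ∀ m, x + (N:ℝ) ≤ tc m := by
    intro m
    by_contra hcon
    push_neg at hcon
    have h1 : |φ (tc m)| ≤ U := hUbound (tc m) ⟨htcx m, hcon.le⟩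
    rw [htcval m] at h1
    have h2 : lev h m ≤ U := le_trans (le_abs_self _) h1
    have : (h:ℝ) + m + 1 ≤ h := le_trans h2 hh3
    have : (0:ℝ) ≤ m := Nat.cast_nonneg m
    linarith [this]
  have htcmono : ∀ m, tc m ≤ tc (m+1) := by
    intro m
    by_contra hcon
    push_neg at hcon
    have := htcfirst m (tc (m+1)) (htcx (m+1)) hcon
    rw [htcval (m+1)] at this
    exact absurd this (not_lt.mpr (lev_lt_succ h m).le)
  have htch : ∀ m, tc m - x ≤ h := fun m => by linarith [htclt m, hh1]
  -- bounds of φ on [x, tc m]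
  have hrange : ∀ m, ∀ v ∈ Icc x (tc m), -(h:ℝ) ≤ φ v ∧ φ v ≤ lev h m := by
    intro m v hv
    have hvIco : v ∈ Ico x ξ := ⟨hv.1, lt_of_le_of_lt hv.2 (htclt m)⟩
    constructor
    · exact le_trans hh2 (hLbound v hvIco)
    · rcases eq_or_lt_of_le hv.2 with he | hlt
      · rw [he, htcval m]
      · exact (htcfirst m v hv.1 hlt).le
  -- Lipschitz bound on [x, tc m]
  have hLip : ∀ m, ∀ v ∈ Icc x (tc m), ∀ w ∈ Icc x (tc m),
      |φ w - φ v| ≤ Mb h m F x * |w - v| := by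
    intro m v hv w hw
    have hsub : Icc x (tc m) ⊆ Ico x ξ := fun a ha => ⟨ha.1, lt_of_le_of_lt ha.2 (htclt m)⟩
    have hder : ∀ a ∈ Icc x (tc m),
        HasDerivWithinAt φ (F (a, φ a)) (Icc x (tc m)) a :=
      fun a ha => (hd a (hsub ha)).mono hsub
    have hbound : ∀ a ∈ Icc x (tc m), ‖F (a, φ a)‖ ≤ Mb h m F x := by
      intro a ha
      rw [Real.norm_eq_abs]
      have hra := hrange m a ha
      refine le_Mb h m F x (mem_reg ?_ ?_ hra.1 hra.2)
      · linarith [ha.1]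
      · have hh0 : (0:ℝ) ≤ h := Nat.cast_nonneg h
        linarith [ha.2, htclt m, hh1]
    have := Convex.norm_image_sub_le_of_norm_hasDerivWithin_le hder hbound
      (convex_Icc x (tc m)) hv hw
    rwa [Real.norm_eq_abs, Real.norm_eq_abs] at this
  -- the witness
  have hclampmem : ∀ m t, φ (max x (min t (tc m))) ∈ Icc (-(h:ℝ)) (lev h m) := by
    intro m t
    have := hrange m _ (clamp_mem (htcx m) t)
    exact ⟨this.1, this.2⟩
  refine ⟨h, ⟨fun m t => ⟨φ (max x (min t (tc m))), hclampmem m t⟩,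
    fun m => ⟨tc m - x, ⟨by have h9 := htcN m; have h8 : (0:ℝ) ≤ (N:ℝ) := Nat.cast_nonneg N; linarith only [h9, h8], htch m⟩⟩⟩, ?_⟩
  have hxσ : ∀ m, x + (tc m - x) = tc m := fun m => by ring
  refine ⟨?_, ?_, ?_, ?_, ?_, ?_, ?_, ?_, ?_⟩
  · intro m; simp only []; linarith [htcN m]
  · intro m; simp only []; linarith [htcmono m]
  · intro m
    simp only []
    rw [clamp_eq_self (le_refl x) (htcx m), hφx]
  · intro m
    simp only [hxσ m]
    rw [clamp_eq_self (htcx m) (le_refl _), htcval m]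
  · intro m t
    simp only [hxσ m]
    rw [clamp_idem (htcx m) t]
  · intro m t ht
    simp only []
    have htle : t ≤ tc m := le_trans ht.2 (htcN m)
    rw [clamp_eq_self ht.1 htle]
    have := hUbound t ht
    have := abs_le.mp this
    linarith [this.2, hh3]
  · intro m t ht
    simp only [hxσ m] at ht ⊢
    rw [clamp_eq_self ht.1 ht.2, clamp_eq_self ht.1 (le_trans ht.2 (htcmono m))]
  · intro m t t'
    simp only []
    refine le_trans (hLip m _ (clamp_mem (htcx m) t') _ (clamp_mem (htcx m) t)) ?_
    have h1 := clamp_lip (a := x) (b := tc m) t t'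
    have h2 : (0:ℝ) ≤ Mb h m F x := Mb_nonneg h m F x
    have h3 : (0:ℝ) ≤ |t - t'| := abs_nonneg _
    nlinarith [h1, h2, h3]
  · intro m t ht
    simp only [hxσ m] at ht ⊢
    rw [clamp_eq_self ht.1 ht.2]
    -- FTC
    have hsub : Icc x t ⊆ Ico x ξ := fun a ha =>
      ⟨ha.1, lt_of_le_of_lt (le_trans ha.2 ht.2) (htclt m)⟩
    have hcIcc : ContinuousOn φ (Icc x t) := hcont.mono hsub
    have hgcont : ContinuousOn (fun s => F (s, φ s)) (Icc x t) :=
      F.continuous.comp_continuousOn (continuousOn_id.prodMk hcIcc)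
    have hgint : IntervalIntegrable (fun s => F (s, φ s)) MeasureTheory.volume x t := by
      rw [intervalIntegrable_iff_integrableOn_Icc_of_le ht.1]
      exact hgcont.integrableOn_compact isCompact_Icc
    have hderiv' : ∀ s ∈ Ioo x t, HasDerivWithinAt φ (F (s, φ s)) (Ioi s) s := by
      intro s hs
      have hsIco : s ∈ Ico x ξ := hsub ⟨hs.1.le, hs.2.le⟩
      refine (hd s hsIco).mono_of_mem_nhdsWithin ?_
      have h1 : Iio ξ ∈ 𝓝[Ioi s] s :=
        nhdsWithin_le_nhds (Iio_mem_nhds (lt_of_le_of_lt hs.2.le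
          (lt_of_le_of_lt ht.2 (htclt m))))
      refine mem_of_superset (inter_mem self_mem_nhdsWithin h1) ?_
      intro a ha
      exact ⟨le_trans hs.1.le ha.1.le, ha.2⟩
    have hFTC := intervalIntegral.integral_eq_sub_of_hasDeriv_right_of_le ht.1
      hcIcc hderiv' hgint
    have hint_congr : (∫ s in x..t, F (s, φ (max x (min s (tc m))))) =
        ∫ s in x..t, F (s, φ s) := by
      refine intervalIntegral.integral_congr ?_
      intro s hs
      rw [uIcc_of_le ht.1] at hs
      have hcl : max x (min s (tc m)) = s := clamp_eq_self hs.1 (le_trans hs.2 ht.2)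
      simp only [hcl]
    rw [hint_congr, hFTC, hφx]
    ring

-- ===================== closedness =====================

lemma abs_triple (a b : ℝ) : |a| ≤ |a - b| + |b| := by
  have := abs_sub_abs_le_abs_sub a b
  linarith

lemma cont_of_lip {C : ℝ} {f : ℝ → ℝ} (hf : ∀ t t', |f t - f t'| ≤ C * |t - t'|) :
    Continuous f := by
  rcases le_total 0 C with hC | hC
  · refine LipschitzWith.continuous (K := Real.toNNReal C) (LipschitzWith.of_dist_le_mul ?_)
    intro t t'
    rw [Real.dist_eq, Real.dist_eq, Real.coe_toNNReal _ hC]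
    exact hf t t'
  · have hconst : ∀ t t', f t = f t' := by
      intro t t'
      have h1 := hf t t'
      have h2 : C * |t - t'| ≤ 0 := mul_nonpos_of_nonpos_of_nonneg hC (abs_nonneg _)
      have := abs_nonneg (f t - f t')
      have : |f t - f t'| = 0 := le_antisymm (le_trans h1 h2) this
      have := abs_eq_zero.mp this
      linarith [this]
    have : f = fun _ => f 0 := funext fun t => hconst t 0
    rw [this]
    exact continuous_const

lemma isClosed_Scond (N h : ℕ) : IsClosed (Scond N h) := by
  refine isClosed_of_closure_subset fun z hz => ?_
  set ℱ : Filter ((C(ℝ × ℝ, ℝ) × ℝ × ℝ) × Wsp h) := 𝓝 z ⊓ 𝓟 (Scond N h) with hℱdef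
  haveI hne : ℱ.NeBot := mem_closure_iff_clusterPt.mp hz
  have hℱle : ℱ ≤ 𝓝 z := inf_le_left
  have hS : ∀ᶠ i in ℱ, i ∈ Scond N h :=
    eventually_inf_principal.mpr (Eventually.of_forall fun i hi => hi)
  set F : C(ℝ × ℝ, ℝ) := z.1.1 with hFdef
  set x : ℝ := z.1.2.1 with hxdef
  set y : ℝ := z.1.2.2 with hydef
  set ψ : ℕ → ℝ → ℝ := fun m t => (z.2.1 m t : ℝ) with hψdef
  set σv : ℕ → ℝ := fun m => (z.2.2 m : ℝ) with hσdef
  set xc : (C(ℝ × ℝ, ℝ) × ℝ × ℝ) × Wsp h → ℝ := fun i => i.1.2.1 with hxcdef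
  set yc : (C(ℝ × ℝ, ℝ) × ℝ × ℝ) × Wsp h → ℝ := fun i => i.1.2.2 with hycdef
  set ψc : (C(ℝ × ℝ, ℝ) × ℝ × ℝ) × Wsp h → ℕ → ℝ → ℝ := fun i m t => (i.2.1 m t : ℝ)
    with hψcdef
  set σc : (C(ℝ × ℝ, ℝ) × ℝ × ℝ) × Wsp h → ℕ → ℝ := fun i m => (i.2.2 m : ℝ) with hσcdef
  have hh0 : (0:ℝ) ≤ h := Nat.cast_nonneg h
  -- componentwise convergence
  have hFt : Tendsto (fun i : (C(ℝ × ℝ, ℝ) × ℝ × ℝ) × Wsp h => i.1.1) ℱ (𝓝 F) :=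
    ((continuous_fst.comp continuous_fst).tendsto z).mono_left hℱle
  have hxt : Tendsto xc ℱ (𝓝 x) :=
    (((continuous_fst.comp continuous_snd).comp continuous_fst).tendsto z).mono_left hℱle
  have hyt : Tendsto yc ℱ (𝓝 y) :=
    (((continuous_snd.comp continuous_snd).comp continuous_fst).tendsto z).mono_left hℱle
  have hσt : ∀ m, Tendsto (fun i => σc i m) ℱ (𝓝 (σv m)) := fun m =>
    ((continuous_subtype_val.comp ((continuous_apply m).comp
      (continuous_snd.comp continuous_snd))).tendsto z).mono_left hℱle
  have hψt : ∀ m t, Tendsto (fun i => ψc i m t) ℱ (𝓝 (ψ m t)) := fun m t =>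
    ((continuous_subtype_val.comp ((continuous_apply t).comp ((continuous_apply m).comp
      (continuous_fst.comp continuous_snd)))).tendsto z).mono_left hℱle
  have hFU : ∀ K : Set (ℝ × ℝ), IsCompact K →
      TendstoUniformlyOn (fun i q => i.1.1 q) F ℱ K := fun K hK =>
    ContinuousMap.tendsto_iff_forall_isCompact_tendstoUniformlyOn.mp hFt K hK
  -- upper semicontinuity of the sup bound
  have hMb : ∀ (m : ℕ), ∀ ε > (0:ℝ), ∀ᶠ i in ℱ, Mb h m i.1.1 (xc i) ≤ Mb h m F x + ε := by
    intro m ε hε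
    set K' : Set (ℝ × ℝ) := Icc (x - 2) (x + h + 2) ×ˢ Icc (-(h:ℝ)) (lev h m) with hK'def
    have hK'cpt : IsCompact K' := isCompact_Icc.prod isCompact_Icc
    have hFuc : UniformContinuousOn F K' :=
      hK'cpt.uniformContinuousOn_of_continuous F.continuous.continuousOn
    rw [Metric.uniformContinuousOn_iff] at hFuc
    obtain ⟨δ, hδpos, hδ⟩ := hFuc (ε/2) (by positivity)
    have hev1 : ∀ᶠ i in ℱ, |xc i - x| < min δ 1 := by
      have := Metric.tendsto_nhds.mp hxt (min δ 1) (lt_min hδpos one_pos)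
      simpa [Real.dist_eq] using this
    have hev2 : ∀ᶠ i in ℱ, ∀ q ∈ K', dist (F q) (i.1.1 q) < ε/2 :=
      Metric.tendstoUniformlyOn_iff.mp (hFU K' hK'cpt) (ε/2) (by positivity)
    filter_upwards [hev1, hev2] with i h1 h2
    refine Real.sSup_le ?_ (by linarith [Mb_nonneg h m F x])
    rintro v ⟨⟨u, w⟩, ⟨⟨hu1, hu2⟩, hw1, hw2⟩, rfl⟩
    simp only [] at hu1 hu2 hw1 hw2 ⊢
    have habs := abs_lt.mp h1
    have habs1 : xc i - x < 1 := lt_of_lt_of_le habs.2 (min_le_right _ _)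
    have habs2 : -(1:ℝ) < xc i - x :=
      lt_of_le_of_lt (neg_le_neg (min_le_right δ 1)) habs.1
    set u' : ℝ := max (x - 1) (min u (x + h + 1)) with hu'def
    have hu'mem : max (x - 1) (min u (x + h + 1)) ∈ Icc (x - 1) (x + h + 1) :=
      clamp_mem (by linarith) u
    rw [← hu'def] at hu'mem
    have hle2 : xc i - x ≤ |xc i - x| := le_abs_self _
    have hle3 : x - xc i ≤ |xc i - x| := by rw [abs_sub_comm]; exact le_abs_self _
    have huu' : |u - u'| ≤ |xc i - x| := by
      rcases le_total u (x - 1) with hc1 | hc1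
      · have he : u' = x - 1 := by
          rw [hu'def, min_eq_left (by linarith), max_eq_left hc1]
        rw [he, abs_of_nonpos (by linarith)]
        linarith
      · rcases le_total u (x + h + 1) with hc2 | hc2
        · have he : u' = u := by rw [hu'def]; exact clamp_eq_self hc1 hc2
          rw [he, sub_self, abs_zero]
          exact abs_nonneg _
        · have he : u' = x + h + 1 := by
            rw [hu'def, min_eq_right hc2, max_eq_right (by linarith)]
          rw [he, abs_of_nonneg (by linarith)]
          linarith
    have hq1 : ((u, w) : ℝ × ℝ) ∈ K' :=
      ⟨⟨by simp only []; linarith, by simp only []; linarith⟩, ⟨hw1, hw2⟩⟩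
    have hq2 : ((u', w) : ℝ × ℝ) ∈ K' :=
      ⟨⟨by simp only []; linarith [hu'mem.1], by simp only []; linarith [hu'mem.2]⟩, ⟨hw1, hw2⟩⟩
    have hdist : dist ((u, w) : ℝ × ℝ) ((u', w) : ℝ × ℝ) < δ := by
      rw [Prod.dist_eq]
      simp only [Real.dist_eq, sub_self, abs_zero]
      have : |u - u'| < δ := lt_of_le_of_lt huu' (lt_of_lt_of_le h1 (min_le_left _ _))
      rw [max_eq_left (abs_nonneg _)]
      exact this
    have hFuw : dist (F (u, w)) (F (u', w)) < ε/2 := hδ _ hq1 _ hq2 hdist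
    have hd1 : dist (F (u, w)) (i.1.1 (u, w)) < ε/2 := h2 _ hq1
    have hle4 : |F (u', w)| ≤ Mb h m F x :=
      le_Mb h m F x (mem_reg hu'mem.1 hu'mem.2 hw1 hw2)
    rw [Real.dist_eq] at hFuw hd1
    have t1 := abs_triple (i.1.1 (u, w)) (F (u, w))
    have t2 := abs_triple (F (u, w)) (F (u', w))
    have : |i.1.1 (u, w) - F (u, w)| = |F (u, w) - i.1.1 (u, w)| := abs_sub_comm _ _
    linarith
  -- eventual Lipschitz bound
  have hLipEv : ∀ m : ℕ, ∀ᶠ i in ℱ, ∀ t t',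
      |ψc i m t - ψc i m t'| ≤ (Mb h m F x + 2) * |t - t'| := by
    intro m
    filter_upwards [hS, hMb m 1 one_pos] with i hi hMbi
    intro t t'
    have h1 := hi.2.2.2.2.2.2.2.1 m t t'
    exact le_trans h1 (mul_le_mul_of_nonneg_right (by linarith) (abs_nonneg _))
  -- limit Lipschitz (condition (F) for z)
  have hL : ∀ m t t', |ψ m t - ψ m t'| ≤ (Mb h m F x + 1) * |t - t'| := by
    intro m t t'
    have hcore : ∀ ε > (0:ℝ), |ψ m t - ψ m t'| ≤ (Mb h m F x + 1 + ε) * |t - t'| := by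
      intro ε hε
      have hevb : ∀ᶠ i in ℱ, |ψc i m t - ψc i m t'| ≤ (Mb h m F x + 1 + ε) * |t - t'| := by
        filter_upwards [hS, hMb m ε hε] with i hi hMbi
        have h1 := hi.2.2.2.2.2.2.2.1 m t t'
        exact le_trans h1 (mul_le_mul_of_nonneg_right (by linarith) (abs_nonneg _))
      have htend : Tendsto (fun i => |ψc i m t - ψc i m t'|) ℱ (𝓝 |ψ m t - ψ m t'|) :=
        ((hψt m t).sub (hψt m t')).abs
      exact le_of_tendsto htend hevb
    rcases eq_or_lt_of_le (abs_nonneg (t - t')) with h0 | h0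
    · have h1 := hcore 1 one_pos
      rw [← h0] at h1 ⊢
      simpa using h1
    · refine le_of_forall_pos_le_add fun ε hε => ?_
      have h1 := hcore (ε / |t - t'|) (by positivity)
      calc |ψ m t - ψ m t'| ≤ (Mb h m F x + 1 + ε / |t - t'|) * |t - t'| := h1
        _ = (Mb h m F x + 1) * |t - t'| + ε := by field_simp
  -- moving-point convergence
  have hKey : ∀ (m : ℕ) (g : (C(ℝ × ℝ, ℝ) × ℝ × ℝ) × Wsp h → ℝ) (t₀ : ℝ),
      Tendsto g ℱ (𝓝 t₀) → Tendsto (fun i => ψc i m (g i)) ℱ (𝓝 (ψ m t₀)) := by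
    intro m g t₀ hg
    rw [Metric.tendsto_nhds]
    intro ε hε
    have hL0 : (0:ℝ) < Mb h m F x + 2 := by linarith [Mb_nonneg h m F x]
    filter_upwards [hLipEv m,
      Metric.tendsto_nhds.mp hg (ε / (2 * (Mb h m F x + 2))) (by positivity),
      Metric.tendsto_nhds.mp (hψt m t₀) (ε/2) (by positivity)] with i h1 h2 h3
    rw [Real.dist_eq] at h2 h3 ⊢
    have hb1 : |ψc i m (g i) - ψc i m t₀| ≤ (Mb h m F x + 2) * |g i - t₀| := h1 _ _
    have hb2 : (Mb h m F x + 2) * |g i - t₀| < ε/2 := by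
      have hm := mul_lt_mul_of_pos_left h2 hL0
      calc (Mb h m F x + 2) * |g i - t₀|
          < (Mb h m F x + 2) * (ε / (2 * (Mb h m F x + 2))) := hm
        _ = ε/2 := by field_simp
    have := abs_sub_le (ψc i m (g i)) (ψc i m t₀) (ψ m t₀)
    linarith
  -- uniform convergence on compact intervals
  have hUnif : ∀ (m : ℕ) (a b : ℝ), ∀ ε > (0:ℝ), ∀ᶠ i in ℱ,
      ∀ s ∈ Icc a b, |ψc i m s - ψ m s| < ε := by
    intro m a b ε hε
    have hL0 : (0:ℝ) < Mb h m F x + 2 := by linarith [Mb_nonneg h m F x]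
    set δ : ℝ := ε / (3 * (Mb h m F x + 2)) with hδdef
    have hδ0 : 0 < δ := by positivity
    have hcover : Icc a b ⊆ ⋃ q : ℝ, Metric.ball q δ :=
      fun s _ => mem_iUnion.mpr ⟨s, Metric.mem_ball_self hδ0⟩
    obtain ⟨T, hT⟩ := isCompact_Icc.elim_finite_subcover
      (fun q : ℝ => Metric.ball q δ) (fun q => Metric.isOpen_ball) hcover
    have hevpts : ∀ᶠ i in ℱ, ∀ q ∈ T, |ψc i m q - ψ m q| < ε/3 := by
      rw [eventually_all_finset]
      intro q hq
      have := Metric.tendsto_nhds.mp (hψt m q) (ε/3) (by positivity)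
      simpa [Real.dist_eq] using this
    filter_upwards [hLipEv m, hevpts] with i h1 h2
    intro s hs
    obtain ⟨q, hqT, hqball⟩ := mem_iUnion₂.mp (hT hs)
    rw [Metric.mem_ball, Real.dist_eq] at hqball
    have e1 : |ψc i m s - ψc i m q| ≤ (Mb h m F x + 2) * |s - q| := h1 s q
    have e2 : |ψ m q - ψ m s| ≤ (Mb h m F x + 1) * |q - s| := hL m q s
    have tri : |ψc i m s - ψ m s| ≤
        |ψc i m s - ψc i m q| + |ψc i m q - ψ m q| + |ψ m q - ψ m s| := by
      have t1 := abs_sub_le (ψc i m s) (ψc i m q) (ψ m s)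
      have t2 := abs_sub_le (ψc i m q) (ψ m q) (ψ m s)
      linarith
    have habsqs : |q - s| = |s - q| := abs_sub_comm q s
    have hLδ : (Mb h m F x + 2) * δ = ε/3 := by rw [hδdef]; field_simp
    have hb1 : (Mb h m F x + 2) * |s - q| < ε/3 := by
      rw [← hLδ]; exact mul_lt_mul_of_pos_left hqball hL0
    have hb2 : (Mb h m F x + 1) * |q - s| < ε/3 := by
      rw [habsqs]
      refine lt_of_le_of_lt (mul_le_mul_of_nonneg_right (by linarith) (abs_nonneg _)) hb1
    linarith [h2 q hqT]
  -- now check all nine conditions for z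
  refine ⟨?_, ?_, ?_, ?_, ?_, ?_, ?_, hL, ?_⟩
  · -- (A1)
    intro m
    exact ge_of_tendsto (hσt m) (hS.mono fun i hi => hi.1 m)
  · -- (A2)
    intro m
    exact le_of_tendsto_of_tendsto (hσt m) (hσt (m+1)) (hS.mono fun i hi => hi.2.1 m)
  · -- (B1)
    intro m
    have h1 : Tendsto (fun i => ψc i m (xc i)) ℱ (𝓝 (ψ m x)) := hKey m xc x hxt
    have h2 : Tendsto (fun i => ψc i m (xc i)) ℱ (𝓝 y) := by
      refine hyt.congr' ?_
      filter_upwards [hS] with i hi using (hi.2.2.1 m).symm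
    exact tendsto_nhds_unique h1 h2
  · -- (B2)
    intro m
    have hg : Tendsto (fun i => xc i + σc i m) ℱ (𝓝 (x + σv m)) := hxt.add (hσt m)
    have h1 : Tendsto (fun i => ψc i m (xc i + σc i m)) ℱ (𝓝 (ψ m (x + σv m))) :=
      hKey m _ _ hg
    have h2 : Tendsto (fun i => ψc i m (xc i + σc i m)) ℱ (𝓝 (lev h m)) := by
      refine tendsto_const_nhds.congr' ?_
      filter_upwards [hS] with i hi using (hi.2.2.2.1 m).symm
    exact tendsto_nhds_unique h1 h2
  · -- (C)
    intro m t
    have hg : Tendsto (fun i => max (xc i) (min t (xc i + σc i m))) ℱ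
        (𝓝 (max x (min t (x + σv m)))) :=
      hxt.max ((tendsto_const_nhds : Tendsto (fun _ => t) ℱ (𝓝 t)).min (hxt.add (hσt m)))
    have h1 : Tendsto (fun i => ψc i m (max (xc i) (min t (xc i + σc i m)))) ℱ
        (𝓝 (ψ m (max x (min t (x + σv m))))) := hKey m _ _ hg
    have h2 : Tendsto (fun i => ψc i m (max (xc i) (min t (xc i + σc i m)))) ℱ
        (𝓝 (ψ m t)) := by
      refine (hψt m t).congr' ?_
      filter_upwards [hS] with i hi using (hi.2.2.2.2.1 m t)
    exact tendsto_nhds_unique h2 h1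
  · -- (D)
    intro m t ht
    have hg : Tendsto (fun i => max (xc i) (min t (xc i + (N:ℝ)))) ℱ (𝓝 t) := by
      have : Tendsto (fun i => max (xc i) (min t (xc i + (N:ℝ)))) ℱ
          (𝓝 (max x (min t (x + (N:ℝ))))) :=
        hxt.max ((tendsto_const_nhds : Tendsto (fun _ => t) ℱ (𝓝 t)).min (hxt.add (tendsto_const_nhds : Tendsto (fun _ => (N:ℝ)) ℱ (𝓝 (N:ℝ)))))
      rwa [clamp_eq_self ht.1 ht.2] at this
    refine le_of_tendsto (hKey m _ _ hg) ?_
    filter_upwards [hS] with i hi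
    refine hi.2.2.2.2.2.1 m _ (clamp_mem (le_add_of_nonneg_right (Nat.cast_nonneg N)) t)
  · -- (E)
    intro m t ht
    have hg : Tendsto (fun i => max (xc i) (min t (xc i + σc i m))) ℱ (𝓝 t) := by
      have := hxt.max ((tendsto_const_nhds : Tendsto (fun _ => t) ℱ (𝓝 t)).min (hxt.add (hσt m)))
      rwa [clamp_eq_self ht.1 ht.2] at this
    have h1 : Tendsto (fun i => ψc i (m+1) (max (xc i) (min t (xc i + σc i m)))) ℱ
        (𝓝 (ψ (m+1) t)) := hKey (m+1) _ _ hg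
    have h2 : Tendsto (fun i => ψc i (m+1) (max (xc i) (min t (xc i + σc i m)))) ℱ
        (𝓝 (ψ m t)) := by
      refine (hKey m _ _ hg).congr' ?_
      filter_upwards [hS] with i hi
      exact (hi.2.2.2.2.2.2.1 m _ (clamp_mem (le_add_of_nonneg_right (i.2.2 m).2.1) t)).symm
    exact tendsto_nhds_unique h1 h2
  · -- (G)
    intro m t ht
    have hg : Tendsto (fun i => max (xc i) (min t (xc i + σc i m))) ℱ (𝓝 t) := by
      have := hxt.max ((tendsto_const_nhds : Tendsto (fun _ => t) ℱ (𝓝 t)).min (hxt.add (hσt m)))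
      rwa [clamp_eq_self ht.1 ht.2] at this
    set gI : (C(ℝ × ℝ, ℝ) × ℝ × ℝ) × Wsp h → ℝ :=
      fun i => max (xc i) (min t (xc i + σc i m)) with hgIdef
    have h1 : Tendsto (fun i => ψc i m (gI i)) ℱ (𝓝 (ψ m t)) := hKey m _ _ hg
    have hψmcont : Continuous (ψ m) := cont_of_lip (hL m)
    set gl : ℝ → ℝ := fun s => F (s, ψ m s) with hgldef
    have hglcont : Continuous gl := F.continuous.comp (continuous_id.prodMk hψmcont)
    have hglbound : ∀ s ∈ Icc (x-1) (x + h + 1), |gl s| ≤ Mb h m F x := fun s hs =>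
      le_Mb h m F x (mem_reg hs.1 hs.2 (z.2.1 m s).2.1 (z.2.1 m s).2.2)
    have hgU : ∀ ε > (0:ℝ), ∀ᶠ i in ℱ, ∀ s ∈ Icc (x-1) (x + h + 1),
        |i.1.1 (s, ψc i m s) - gl s| < ε := by
      intro ε hε
      set K : Set (ℝ × ℝ) := Icc (x-1) (x + h + 1) ×ˢ Icc (-(h:ℝ)) (lev h m) with hKdef
      have hKcpt : IsCompact K := isCompact_Icc.prod isCompact_Icc
      have hFuc : UniformContinuousOn F K :=
        hKcpt.uniformContinuousOn_of_continuous F.continuous.continuousOn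
      rw [Metric.uniformContinuousOn_iff] at hFuc
      obtain ⟨δ, hδpos, hδ⟩ := hFuc (ε/2) (by positivity)
      filter_upwards [Metric.tendstoUniformlyOn_iff.mp (hFU K hKcpt) (ε/2) (by positivity),
        hUnif m (x-1) (x + h + 1) δ hδpos] with i h2 h3
      intro s hs
      have hmem1 : ((s, ψc i m s) : ℝ × ℝ) ∈ K := ⟨hs, (i.2.1 m s).2.1, (i.2.1 m s).2.2⟩
      have hmem2 : ((s, ψ m s) : ℝ × ℝ) ∈ K := ⟨hs, (z.2.1 m s).2.1, (z.2.1 m s).2.2⟩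
      have hdist : dist ((s, ψc i m s) : ℝ × ℝ) ((s, ψ m s) : ℝ × ℝ) < δ := by
        rw [Prod.dist_eq]
        simp only [Real.dist_eq, sub_self, abs_zero]
        rw [max_eq_right (abs_nonneg _)]
        exact h3 s hs
      have hd1 : dist (F (s, ψc i m s)) (F (s, ψ m s)) < ε/2 := hδ _ hmem1 _ hmem2 hdist
      have hd2 : dist (F (s, ψc i m s)) (i.1.1 (s, ψc i m s)) < ε/2 := h2 _ hmem1
      rw [Real.dist_eq] at hd1 hd2
      have htr := abs_sub_le (i.1.1 (s, ψc i m s)) (F (s, ψc i m s)) (gl s)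
      have habs : |i.1.1 (s, ψc i m s) - F (s, ψc i m s)| =
          |F (s, ψc i m s) - i.1.1 (s, ψc i m s)| := abs_sub_comm _ _
      simp only [hgldef] at htr ⊢
      linarith
    have hGi : ∀ᶠ i in ℱ, ψc i m (gI i) =
        yc i + ∫ s in (xc i)..(gI i), i.1.1 (s, ψc i m s) := by
      filter_upwards [hS] with i hi
      exact hi.2.2.2.2.2.2.2.2 m _ (clamp_mem (le_add_of_nonneg_right (i.2.2 m).2.1) t)
    have hRHS : Tendsto (fun i => yc i + ∫ s in (xc i)..(gI i), i.1.1 (s, ψc i m s)) ℱ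
        (𝓝 (y + ∫ s in x..t, gl s)) := by
      rw [Metric.tendsto_nhds]
      intro ε hε
      have hC0 : (0:ℝ) < Mb h m F x + 1 := by linarith [Mb_nonneg h m F x]
      have hh2 : (0:ℝ) < (h:ℝ) + 2 := by linarith
      filter_upwards [hS,
        Metric.tendsto_nhds.mp hyt (ε/5) (by positivity),
        Metric.tendsto_nhds.mp hxt (min 1 (ε/(5*(Mb h m F x + 1))))
          (lt_min one_pos (by positivity)),
        Metric.tendsto_nhds.mp hg (min 1 (ε/(5*(Mb h m F x + 1))))
          (lt_min one_pos (by positivity)),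
        hgU (ε/(5*((h:ℝ)+2))) (by positivity)]
        with i hi h5y h5x h5g h5U
      rw [Real.dist_eq] at h5y h5x h5g ⊢
      have hxc1 : |xc i - x| < 1 := lt_of_lt_of_le h5x (min_le_left _ _)
      have hxc2 : |xc i - x| < ε/(5*(Mb h m F x + 1)) := lt_of_lt_of_le h5x (min_le_right _ _)
      have hgc1 : |gI i - t| < 1 := lt_of_lt_of_le h5g (min_le_left _ _)
      have hgc2 : |gI i - t| < ε/(5*(Mb h m F x + 1)) := lt_of_lt_of_le h5g (min_le_right _ _)
      have habsx := abs_lt.mp hxc1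
      have hσvh : σv m ≤ h := (z.2.2 m).2.2
      have hσv0 : (0:ℝ) ≤ σv m := (z.2.2 m).2.1
      have hσc0 : (0:ℝ) ≤ σc i m := (i.2.2 m).2.1
      have hσch : σc i m ≤ h := (i.2.2 m).2.2
      have hgIicc : gI i ∈ Icc (xc i) (xc i + σc i m) :=
        clamp_mem (le_add_of_nonneg_right hσc0) t
      have hJx : x ∈ Icc (x-1) (x+(h:ℝ)+1) := ⟨by linarith, by linarith⟩
      have hJt : t ∈ Icc (x-1) (x+(h:ℝ)+1) :=
        ⟨by linarith [ht.1], by linarith [ht.2]⟩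
      have hJxc : xc i ∈ Icc (x-1) (x+(h:ℝ)+1) :=
        ⟨by linarith [habsx.1], by linarith [habsx.2]⟩
      have hJgI : gI i ∈ Icc (x-1) (x+(h:ℝ)+1) :=
        ⟨by linarith [hgIicc.1, habsx.1], by linarith [hgIicc.2, habsx.2]⟩
      have hψccont : Continuous (fun s => ψc i m s) := cont_of_lip (hi.2.2.2.2.2.2.2.1 m)
      have hgicont : Continuous (fun s => i.1.1 (s, ψc i m s)) :=
        i.1.1.continuous.comp (continuous_id.prodMk hψccont)
      have hint1 : IntervalIntegrable (fun s => i.1.1 (s, ψc i m s))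
          MeasureTheory.volume (xc i) (gI i) := hgicont.intervalIntegrable _ _
      have hintgl : ∀ a b : ℝ, IntervalIntegrable gl MeasureTheory.volume a b :=
        hglcont.intervalIntegrable
      have hsplit : (∫ s in (xc i)..(gI i), gl s) =
          (∫ s in (xc i)..x, gl s) + (∫ s in x..t, gl s) + (∫ s in t..(gI i), gl s) := by
        rw [intervalIntegral.integral_add_adjacent_intervals (hintgl _ _) (hintgl _ _),
          intervalIntegral.integral_add_adjacent_intervals (hintgl _ _) (hintgl _ _)]
      have hdiff : (∫ s in (xc i)..(gI i), (i.1.1 (s, ψc i m s) - gl s)) =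
          (∫ s in (xc i)..(gI i), i.1.1 (s, ψc i m s)) - ∫ s in (xc i)..(gI i), gl s :=
        intervalIntegral.integral_sub hint1 (hintgl _ _)
      have hsub1 : Set.uIoc (xc i) (gI i) ⊆ Icc (x-1) (x+(h:ℝ)+1) := by
        intro s hs
        exact ⟨le_trans (le_min hJxc.1 hJgI.1) hs.1.le,
          le_trans hs.2 (max_le hJxc.2 hJgI.2)⟩
      have hsub2 : Set.uIoc (xc i) x ⊆ Icc (x-1) (x+(h:ℝ)+1) := by
        intro s hs
        exact ⟨le_trans (le_min hJxc.1 hJx.1) hs.1.le,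
          le_trans hs.2 (max_le hJxc.2 hJx.2)⟩
      have hsub3 : Set.uIoc t (gI i) ⊆ Icc (x-1) (x+(h:ℝ)+1) := by
        intro s hs
        exact ⟨le_trans (le_min hJt.1 hJgI.1) hs.1.le,
          le_trans hs.2 (max_le hJt.2 hJgI.2)⟩
      have hb1 : |∫ s in (xc i)..(gI i), (i.1.1 (s, ψc i m s) - gl s)| ≤
          (ε/(5*((h:ℝ)+2))) * |gI i - xc i| := by
        have hle := intervalIntegral.norm_integral_le_of_norm_le_const
          (C := ε/(5*((h:ℝ)+2))) (f := fun s => i.1.1 (s, ψc i m s) - gl s)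
          (a := xc i) (b := gI i) (fun s hs => by
            rw [Real.norm_eq_abs]; exact (h5U s (hsub1 hs)).le)
        rwa [Real.norm_eq_abs] at hle
      have hb2 : |∫ s in (xc i)..x, gl s| ≤ (Mb h m F x) * |x - xc i| := by
        have hle := intervalIntegral.norm_integral_le_of_norm_le_const
          (C := Mb h m F x) (f := gl) (a := xc i) (b := x) (fun s hs => by
            rw [Real.norm_eq_abs]; exact hglbound s (hsub2 hs))
        rwa [Real.norm_eq_abs] at hle
      have hb3 : |∫ s in t..(gI i), gl s| ≤ (Mb h m F x) * |gI i - t| := by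
        have hle := intervalIntegral.norm_integral_le_of_norm_le_const
          (C := Mb h m F x) (f := gl) (a := t) (b := gI i) (fun s hs => by
            rw [Real.norm_eq_abs]; exact hglbound s (hsub3 hs))
        rwa [Real.norm_eq_abs] at hle
      have hcomb : (yc i + ∫ s in (xc i)..(gI i), i.1.1 (s, ψc i m s)) -
          (y + ∫ s in x..t, gl s) =
          (yc i - y) + (∫ s in (xc i)..(gI i), (i.1.1 (s, ψc i m s) - gl s)) +
          (∫ s in (xc i)..x, gl s) + (∫ s in t..(gI i), gl s) := by
        rw [hdiff, hsplit]; ring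
      have htot : |(yc i + ∫ s in (xc i)..(gI i), i.1.1 (s, ψc i m s)) -
          (y + ∫ s in x..t, gl s)| ≤
          |yc i - y| + |∫ s in (xc i)..(gI i), (i.1.1 (s, ψc i m s) - gl s)| +
          |∫ s in (xc i)..x, gl s| + |∫ s in t..(gI i), gl s| := by
        rw [hcomb]
        have t1 := abs_add_le ((yc i - y) + (∫ s in (xc i)..(gI i),
          (i.1.1 (s, ψc i m s) - gl s)) + (∫ s in (xc i)..x, gl s)) (∫ s in t..(gI i), gl s)
        have t2 := abs_add_le ((yc i - y) + (∫ s in (xc i)..(gI i),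
          (i.1.1 (s, ψc i m s) - gl s))) (∫ s in (xc i)..x, gl s)
        have t3 := abs_add_le (yc i - y) (∫ s in (xc i)..(gI i), (i.1.1 (s, ψc i m s) - gl s))
        linarith
      -- numeric assembly
      have hlen : |gI i - xc i| ≤ (h:ℝ) + 2 := by
        rw [abs_of_nonneg (by linarith [hgIicc.1])]
        linarith [hgIicc.2]
      have hc1 : (ε/(5*((h:ℝ)+2))) * |gI i - xc i| ≤ ε/5 := by
        have hεnn : (0:ℝ) ≤ ε/(5*((h:ℝ)+2)) := by positivity
        calc (ε/(5*((h:ℝ)+2))) * |gI i - xc i| ≤ (ε/(5*((h:ℝ)+2))) * ((h:ℝ)+2) :=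
              mul_le_mul_of_nonneg_left hlen hεnn
          _ = ε/5 := by field_simp
      have hc2 : (Mb h m F x) * |x - xc i| < ε/5 := by
        have : |x - xc i| < ε/(5*(Mb h m F x + 1)) := by rwa [abs_sub_comm]
        calc (Mb h m F x) * |x - xc i| ≤ (Mb h m F x + 1) * |x - xc i| :=
              mul_le_mul_of_nonneg_right (by linarith) (abs_nonneg _)
          _ < (Mb h m F x + 1) * (ε/(5*(Mb h m F x + 1))) :=
              mul_lt_mul_of_pos_left this hC0
          _ = ε/5 := by field_simp
      have hc3 : (Mb h m F x) * |gI i - t| < ε/5 := by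
        calc (Mb h m F x) * |gI i - t| ≤ (Mb h m F x + 1) * |gI i - t| :=
              mul_le_mul_of_nonneg_right (by linarith) (abs_nonneg _)
          _ < (Mb h m F x + 1) * (ε/(5*(Mb h m F x + 1))) :=
              mul_lt_mul_of_pos_left hgc2 hC0
          _ = ε/5 := by field_simp
      linarith
    have h2' : Tendsto (fun i => ψc i m (gI i)) ℱ (𝓝 (y + ∫ s in x..t, gl s)) :=
      hRHS.congr' (hGi.mono fun i hi => hi.symm)
    exact tendsto_nhds_unique h1 h2'

end Stmt7

/-- Lemma 5.19(b): for every `N ∈ ℕ`, both `A⁺_N` and `A⁻_N` are `Σ⁰₂` subsets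
of `C(ℝ²) × ℝ²`. -/
theorem statement7 (N : ℕ) : IsSigma02 (AplusN N) ∧ IsSigma02 (AminusN N) := by
  have hplus : IsSigma02 (AplusN N) := by
    refine ⟨fun n => Prod.fst '' (Stmt7.Scond N n), fun n => ?_, ?_⟩
    · exact isClosedMap_fst_of_compactSpace _ (Stmt7.isClosed_Scond N n)
    · ext p
      constructor
      · intro hp
        obtain ⟨h, w, hSC⟩ := Stmt7.sound hp
        exact mem_iUnion.mpr ⟨h, ⟨(p, w), hSC, rfl⟩⟩
      · intro hp
        obtain ⟨n, hn⟩ := mem_iUnion.mp hp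
        obtain ⟨z, hz1, rfl⟩ := hn
        exact Stmt7.recon hz1
  refine ⟨hplus, ?_⟩
  obtain ⟨C, hC, hEq⟩ := hplus
  refine ⟨fun n => Stmt7.TT ⁻¹' C n, fun n => (hC n).preimage Stmt7.continuous_TT, ?_⟩
  ext p
  rw [show (p ∈ AminusN N) = (Stmt7.TT p ∈ AplusN N) from propext (Stmt7.mem_AminusN_iff p),
    hEq]
  simp [mem_iUnion]
end
end

section
/- For all M, N, h ∈ ℕ with M ≥ N, the set B^M_{N,h} is a Σ⁰₂ (i.e. a countable union of closed sets) subset of C(ℝ²) × ℝ². -/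
open Set Filter Topology
open scoped Classical

noncomputable section

namespace Statement8Aux

open MeasureTheory intervalIntegral
open scoped NNReal

/-! ### Basic facts about `Dom` -/

lemma Dom_mono (x : ℝ) {b b' : EReal} (hb : b ≤ b') : Dom x b ⊆ Dom x b' :=
  fun _ ht => ⟨ht.1, lt_of_lt_of_le ht.2 hb⟩

lemma exists_real_between {t : ℝ} {b : EReal} (h : (t : EReal) < b) :
    ∃ r : ℝ, t < r ∧ (r : EReal) ≤ b := by
  induction b using EReal.rec with
  | bot => exact absurd h (by simp)
  | coe b => exact ⟨b, by exact_mod_cast h, le_rfl⟩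
  | top => exact ⟨t + 1, by linarith, le_top⟩

lemma Dom_mem_nhdsWithin {x t : ℝ} {b b' : EReal} (hb : b ≤ b') (ht : t ∈ Dom x b) :
    Dom x b ∈ nhdsWithin t (Dom x b') := by
  obtain ⟨r, htr, hrb⟩ := exists_real_between ht.2
  refine mem_nhdsWithin.mpr ⟨Set.Iio r, isOpen_Iio, htr, ?_⟩
  rintro u ⟨hu1, hu2⟩
  exact ⟨hu2.1, lt_of_lt_of_le (by exact_mod_cast hu1) hrb⟩

/-- Transfer the differential equation from a solution to a function extending it,
relative to a larger domain. -/
lemma deriv_transfer {F : C(ℝ × ℝ, ℝ)} {x : ℝ} {b b' : EReal} {ψ Φ : ℝ → ℝ}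
    (hbb : b ≤ b') (hagree : ∀ t ∈ Dom x b, Φ t = ψ t) {t : ℝ} (ht : t ∈ Dom x b)
    (hd : HasDerivWithinAt ψ (F (t, ψ t)) (Dom x b) t) :
    HasDerivWithinAt Φ (F (t, Φ t)) (Dom x b') t := by
  have hmem : Dom x b ∈ nhdsWithin t (Dom x b') := Dom_mem_nhdsWithin hbb ht
  have h1 : HasDerivWithinAt ψ (F (t, ψ t)) (Dom x b') t := hd.mono_of_mem_nhdsWithin hmem
  have h2 : Φ =ᶠ[nhdsWithin t (Dom x b')] ψ := Filter.eventually_of_mem hmem hagree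
  have h3 := h1.congr_of_eventuallyEq h2 (hagree t ht)
  rwa [hagree t ht]

/-! ### Zorn: every partial solution extends to a non-extendible one -/

lemma exists_solPlus_ext (F : C(ℝ × ℝ, ℝ)) (x y : ℝ) (c : EReal) (φ : ℝ → ℝ)
    (hP : PSol F x y c φ) :
    ∃ (b : EReal) (Φ : ℝ → ℝ), SolPlus F x y b Φ ∧ c ≤ b ∧ ∀ t ∈ Dom x c, Φ t = φ t := by
  classical
  let P : Set (EReal × (ℝ → ℝ)) :=
    {q | PSol F x y q.1 q.2 ∧ c ≤ q.1 ∧ ∀ t ∈ Dom x c, q.2 t = φ t}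
  have hbase : (c, φ) ∈ P := ⟨hP, le_rfl, fun _ _ => rfl⟩
  let r : P → P → Prop := fun a b => a.1.1 ≤ b.1.1 ∧ ∀ t ∈ Dom x a.1.1, b.1.2 t = a.1.2 t
  have hrefl : ∀ a : P, r a a := fun a => ⟨le_rfl, fun _ _ => rfl⟩
  have htrans : ∀ {a b c : P}, r a b → r b c → r a c := by
    rintro a b c ⟨h1, h2⟩ ⟨h3, h4⟩
    exact ⟨h1.trans h3, fun t ht => (h4 t (Dom_mono x h1 ht)).trans (h2 t ht)⟩
  have hchain : ∀ ch : Set P, IsChain r ch → ∃ ub, ∀ a ∈ ch, r a ub := by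
    intro ch hch
    rcases ch.eq_empty_or_nonempty with rfl | ⟨q₀, hq₀⟩
    · exact ⟨⟨(c, φ), hbase⟩, by simp⟩
    have agree : ∀ q ∈ ch, ∀ q' ∈ ch, ∀ t, t ∈ Dom x (q : P).1.1 →
        t ∈ Dom x (q' : P).1.1 → (q : P).1.2 t = (q' : P).1.2 t := by
      intro q hq q' hq' t ht ht'
      by_cases hqq : q = q'
      · rw [hqq]
      rcases hch hq hq' hqq with hr | hr
      · exact (hr.2 t ht).symm
      · exact hr.2 t ht'
    set b' : EReal := sSup ((fun q : P => q.1.1) '' ch) with hb'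
    have hle : ∀ q ∈ ch, (q : P).1.1 ≤ b' := fun q hq => le_sSup ⟨q, hq, rfl⟩
    set Φ : ℝ → ℝ :=
      fun t => if H : ∃ q : P, q ∈ ch ∧ t ∈ Dom x q.1.1 then H.choose.1.2 t else φ t with hΦdef
    have hΦ : ∀ q ∈ ch, ∀ t ∈ Dom x (q : P).1.1, Φ t = (q : P).1.2 t := by
      intro q hq t ht
      have H : ∃ q : P, q ∈ ch ∧ t ∈ Dom x q.1.1 := ⟨q, hq, ht⟩
      have hspec := H.choose_spec
      simp only [hΦdef, dif_pos H]
      exact agree _ hspec.1 q hq t hspec.2 ht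
    have hq₀P := q₀.2
    have hxq₀ : x ∈ Dom x q₀.1.1 := ⟨le_rfl, hq₀P.1.1⟩
    have hPsol : PSol F x y b' Φ := by
      refine ⟨lt_of_lt_of_le hq₀P.1.1 (hle q₀ hq₀), ?_, ?_⟩
      · rw [hΦ q₀ hq₀ x hxq₀]; exact hq₀P.1.2.1
      · intro t ht
        obtain ⟨e, ⟨q, hq, rfl⟩, hlt⟩ := lt_sSup_iff.mp ht.2
        have htq : t ∈ Dom x (q : P).1.1 := ⟨ht.1, hlt⟩
        exact deriv_transfer (hle q hq) (hΦ q hq) htq (q.2.1.2.2 t htq)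
    have hubP : (b', Φ) ∈ P := by
      refine ⟨hPsol, hq₀P.2.1.trans (hle q₀ hq₀), fun t ht => ?_⟩
      show Φ t = φ t
      have htq : t ∈ Dom x q₀.1.1 := Dom_mono x hq₀P.2.1 ht
      rw [hΦ q₀ hq₀ t htq]
      exact hq₀P.2.2 t ht
    exact ⟨⟨(b', Φ), hubP⟩, fun q hq => ⟨hle q hq, fun t ht => hΦ q hq t ht⟩⟩
  obtain ⟨m, hm⟩ := exists_maximal_of_chains_bounded hchain (fun {a b c} => htrans)
  refine ⟨m.1.1, m.1.2, ⟨m.2.1, ?_⟩, m.2.2.1, m.2.2.2⟩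
  intro b'' ψ hlt hagree' hPS
  have haP : (b'', ψ) ∈ P := by
    refine ⟨hPS, m.2.2.1.trans hlt.le, fun t ht => ?_⟩
    show ψ t = φ t
    have htm : t ∈ Dom x m.1.1 := Dom_mono x m.2.2.1 ht
    rw [hagree' t htm]
    exact m.2.2.2 t ht
  have := (hm ⟨(b'', ψ), haP⟩ ⟨hlt.le, hagree'⟩).1
  exact absurd this (not_le.mpr hlt)

/-! ### The compact witness sets -/

/-- Functions bounded by `k` and Lipschitz with constant `L`. -/
def Kset (k L : ℕ) : Set C(ℝ, ℝ) :=
  {ψ | LipschitzWith L ψ ∧ ∀ s, |ψ s| ≤ (k : ℝ)}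

lemma isCompact_Kset (k L : ℕ) : IsCompact (Kset k L) := by
  apply ArzelaAscoli.isCompact_of_equicontinuous
  · have himg : ContinuousMap.toFun '' Kset k L =
        {f : ℝ → ℝ | LipschitzWith L f ∧ ∀ s, f s ∈ Set.Icc (-(k : ℝ)) (k : ℝ)} := by
      ext f
      constructor
      · rintro ⟨g, ⟨hg1, hg2⟩, rfl⟩
        exact ⟨hg1, fun s => abs_le.mp (hg2 s)⟩
      · rintro ⟨h1, h2⟩
        exact ⟨⟨f, h1.continuous⟩, ⟨h1, fun s => abs_le.mpr (h2 s)⟩, rfl⟩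
    rw [himg]
    have hsub : {f : ℝ → ℝ | LipschitzWith L f ∧ ∀ s, f s ∈ Set.Icc (-(k : ℝ)) (k : ℝ)} ⊆
        {f : ℝ → ℝ | ∀ s, f s ∈ Set.Icc (-(k : ℝ)) (k : ℝ)} := fun f hf => hf.2
    refine IsCompact.of_isClosed_subset (isCompact_pi_infinite fun _ => isCompact_Icc) ?_ hsub
    have h1 : IsClosed {f : ℝ → ℝ | LipschitzWith L f} := by
      have : {f : ℝ → ℝ | LipschitzWith L f} =
          ⋂ (a : ℝ) (b : ℝ), {f : ℝ → ℝ | dist (f a) (f b) ≤ (L : ℝ) * dist a b} := by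
        ext f
        simp only [Set.mem_setOf_eq, Set.mem_iInter, lipschitzWith_iff_dist_le_mul]
        rfl
      rw [this]
      exact isClosed_iInter fun a => isClosed_iInter fun b =>
        isClosed_le ((continuous_apply a).dist (continuous_apply b)) continuous_const
    have h2 : IsClosed {f : ℝ → ℝ | ∀ s, f s ∈ Set.Icc (-(k : ℝ)) (k : ℝ)} := by
      have : {f : ℝ → ℝ | ∀ s, f s ∈ Set.Icc (-(k : ℝ)) (k : ℝ)} =
          ⋂ (s : ℝ), (fun f : ℝ → ℝ => f s) ⁻¹' Set.Icc (-(k : ℝ)) (k : ℝ)  := by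
        ext f; simp
      rw [this]
      exact isClosed_iInter fun s => isClosed_Icc.preimage (continuous_apply s)
    exact h1.inter h2
  · apply Metric.equicontinuous_of_continuity_modulus (fun d => (L : ℝ) * d)
    · simpa using (continuous_mul_left (L : ℝ)).tendsto (0 : ℝ)
    · intro a b i
      exact i.2.1.dist_le_mul a b

/-! ### The closed pieces of `Bset` -/

/-- The right endpoint `M + 1/(j+1)`. -/
def cj (M j : ℕ) : ℝ := M + 1 / (j + 1)

lemma cj_pos (M j : ℕ) : 0 < cj M j := by
  have h1 : (0 : ℝ) < 1 / (j + 1) := by positivity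
  have h2 : (0 : ℝ) ≤ M := Nat.cast_nonneg M
  unfold cj; linarith

lemma lt_cj (M j : ℕ) : (M : ℝ) < cj M j := by
  have : (0 : ℝ) < 1 / (j + 1) := by positivity
  unfold cj; linarith

/-- The defining closed condition. -/
def CC (M N h j k L : ℕ) : Set (C(ℝ × ℝ, ℝ) × ℝ × ℝ) :=
  {p | ∃ ψ ∈ Kset k L, ψ 0 = p.2.2 ∧ (∀ s ∈ Set.Icc (0 : ℝ) (N : ℝ), |ψ s| ≤ (h : ℝ)) ∧
    ∀ s ∈ Set.Icc (0 : ℝ) (cj M j), ψ s = p.2.2 + ∫ u in (0 : ℝ)..s, p.1 (p.2.1 + u, ψ u)}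

/-! ### Closedness of `CC` -/

lemma isClosed_CC (M N h j k L : ℕ) : IsClosed (CC M N h j k L) := by
  refine IsSeqClosed.isClosed ?_
  intro pn p hpn hlim
  choose ψn hψK hψ0 hψh hψint using hpn
  obtain ⟨ψ, hψK', σ, hσ, hψlim⟩ := (isCompact_Kset k L).isSeqCompact hψK
  have hσt : Tendsto σ atTop atTop := hσ.tendsto_atTop
  have hplim : Tendsto (fun n => pn (σ n)) atTop (𝓝 p) := hlim.comp hσt
  have hxlim : Tendsto (fun n => (pn (σ n)).2.1) atTop (𝓝 p.2.1) :=
    ((continuous_fst.comp continuous_snd).tendsto p).comp hplim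
  have hylim : Tendsto (fun n => (pn (σ n)).2.2) atTop (𝓝 p.2.2) :=
    ((continuous_snd.comp continuous_snd).tendsto p).comp hplim
  have hFlim : Tendsto (fun n => (pn (σ n)).1) atTop (𝓝 p.1) :=
    (continuous_fst.tendsto p).comp hplim
  have hψptlim : ∀ u : ℝ, Tendsto (fun n => ψn (σ n) u) atTop (𝓝 (ψ u)) := fun u =>
    ((continuous_eval_const u).tendsto ψ).comp hψlim
  refine ⟨ψ, hψK', ?_, ?_, ?_⟩
  · have heq : (fun n => ψn (σ n) 0) = fun n => (pn (σ n)).2.2 :=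
      funext fun n => hψ0 (σ n)
    exact tendsto_nhds_unique (hψptlim 0) (heq ▸ hylim)
  · intro s hs
    exact le_of_tendsto ((continuous_abs.tendsto _).comp (hψptlim s))
      (Filter.Eventually.of_forall fun n => hψh (σ n) s hs)
  · intro s hs
    set c := cj M j with hc
    set Q : Set (ℝ × ℝ) := Set.Icc (p.2.1 - 1) (p.2.1 + c + 1) ×ˢ Set.Icc (-(k : ℝ)) (k : ℝ)
      with hQ
    have hQc : IsCompact Q := isCompact_Icc.prod isCompact_Icc
    have hFQ : TendstoUniformlyOn (fun n q => (pn (σ n)).1 q) p.1 atTop Q :=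
      (ContinuousMap.tendsto_iff_forall_isCompact_tendstoUniformlyOn.mp hFlim) Q hQc
    obtain ⟨C, hC⟩ := hQc.exists_bound_of_continuousOn p.1.continuous.continuousOn
    have hev1 : ∀ᶠ n in atTop, ∀ q ∈ Q, dist (p.1 q) ((pn (σ n)).1 q) < 1 :=
      (Metric.tendstoUniformlyOn_iff.mp hFQ) 1 one_pos
    have hev2 : ∀ᶠ n in atTop, dist ((pn (σ n)).2.1) p.2.1 < 1 := by
      have := hxlim (Metric.ball_mem_nhds p.2.1 one_pos)
      simpa [Metric.mem_ball] using this
    have hmemQ : ∀ n, dist ((pn (σ n)).2.1) p.2.1 < 1 → ∀ u ∈ Set.uIoc (0 : ℝ) s,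
        ((pn (σ n)).2.1 + u, ψn (σ n) u) ∈ Q := by
      intro n hn u hu
      rw [Set.uIoc_of_le hs.1] at hu
      have hu1 : 0 < u := hu.1
      have hu2 : u ≤ c := hu.2.trans hs.2
      have hd := abs_lt.mp (by rwa [Real.dist_eq] at hn)
      rw [Set.mem_prod]
      dsimp only
      refine ⟨⟨by linarith [hd.1], by linarith [hd.2]⟩, ?_⟩
      rw [Set.mem_Icc]
      exact abs_le.mp ((hψK (σ n)).2 u)
    have key : Tendsto
        (fun n => ∫ u in (0:ℝ)..s, (pn (σ n)).1 ((pn (σ n)).2.1 + u, ψn (σ n) u))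
        atTop (𝓝 (∫ u in (0:ℝ)..s, p.1 (p.2.1 + u, ψ u))) := by
      apply intervalIntegral.tendsto_integral_filter_of_dominated_convergence (fun _ => C + 1)
      · refine Filter.Eventually.of_forall fun n => ?_
        exact (((pn (σ n)).1.continuous.comp ((continuous_const.add continuous_id).prodMk
          (ψn (σ n)).continuous)).aestronglyMeasurable)
      · filter_upwards [hev1, hev2] with n h1 h2
        refine MeasureTheory.ae_of_all _ fun u hu => ?_
        have hq := hmemQ n h2 u hu
        have h1q := h1 _ hq
        have hCq := hC _ hq
        rw [Real.dist_eq] at h1q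
        rw [Real.norm_eq_abs] at hCq ⊢
        have habs := abs_sub_abs_le_abs_sub
          ((pn (σ n)).1 ((pn (σ n)).2.1 + u, ψn (σ n) u))
          (p.1 ((pn (σ n)).2.1 + u, ψn (σ n) u))
        rw [abs_sub_comm] at habs
        linarith
      · exact intervalIntegrable_const
      · refine MeasureTheory.ae_of_all _ fun u hu => ?_
        have htend : Tendsto (fun n => ((pn (σ n)).1, ((pn (σ n)).2.1 + u, ψn (σ n) u)))
            atTop (𝓝 (p.1, (p.2.1 + u, ψ u))) :=
          hFlim.prodMk_nhds ((hxlim.add_const u).prodMk_nhds (hψptlim u))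
        exact ((continuous_eval.tendsto _).comp htend : _)
    have hseq : (fun n => ψn (σ n) s) = fun n =>
        (pn (σ n)).2.2 + ∫ u in (0:ℝ)..s, (pn (σ n)).1 ((pn (σ n)).2.1 + u, ψn (σ n) u) :=
      funext fun n => hψint (σ n) s hs
    exact tendsto_nhds_unique (hψptlim s) (hseq ▸ hylim.add key)

/-! ### `CC ⊆ Bset` -/

lemma CC_subset_Bset (M N h j k L : ℕ) (hMN : N ≤ M) : CC M N h j k L ⊆ Bset M N h := by
  rintro ⟨F, x, y⟩ ⟨ψ, ⟨hψlip, hψbd⟩, hψ0, hψh, hψint⟩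
  dsimp only at hψ0 hψh hψint ⊢
  set c := cj M j with hc
  have hc0 : 0 < c := cj_pos M j
  have hMc : (M : ℝ) < c := lt_cj M j
  have hNM : (N : ℝ) ≤ (M : ℝ) := by exact_mod_cast hMN
  set φ : ℝ → ℝ := fun t => ψ (t - x) with hφ
  set G : ℝ → ℝ := fun u => F (x + u, ψ u) with hG
  have hGc : Continuous G :=
    F.continuous.comp ((continuous_const.add continuous_id).prodMk ψ.continuous)
  set I : ℝ → ℝ := fun t => y + ∫ u in (0:ℝ)..(t - x), G u with hI
  have hId : ∀ t : ℝ, HasDerivAt I (G (t - x)) t := by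
    intro t
    have h1 : HasDerivAt (fun w => ∫ u in (0:ℝ)..w, G u) (G (t - x)) (t - x) :=
      (hGc.integral_hasStrictDerivAt 0 (t - x)).hasDerivAt
    have h2 : HasDerivAt (fun w : ℝ => w - x) 1 t := (hasDerivAt_id t).sub_const x
    have h3 := HasDerivAt.comp t h1 h2
    simpa [Function.comp, hI] using h3.const_add y
  have hkey : ∀ t ∈ Set.Icc x (x + c), φ t = I t := by
    intro t ht
    have hts : t - x ∈ Set.Icc (0:ℝ) c := ⟨by linarith [ht.1], by linarith [ht.2]⟩
    simpa [hφ, hI, hG] using hψint (t - x) hts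
  set bb : EReal := ((x + c : ℝ) : EReal) with hbb
  have hDomsub : Dom x bb ⊆ Set.Icc x (x + c) := by
    rintro u ⟨hu1, hu2⟩
    rw [hbb] at hu2
    exact ⟨hu1, le_of_lt (by exact_mod_cast hu2)⟩
  have hPsol : PSol F x y bb φ := by
    refine ⟨by rw [hbb]; exact_mod_cast (by linarith : x < x + c), by simp [hφ, hψ0], ?_⟩
    intro t ht
    have h1 : HasDerivWithinAt I (G (t - x)) (Dom x bb) t := (hId t).hasDerivWithinAt
    have h2 : HasDerivWithinAt φ (G (t - x)) (Dom x bb) t :=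
      h1.congr (fun u hu => hkey u (hDomsub hu)) (hkey t (hDomsub ht))
    have h4 : x + (t - x) = t := by ring
    have h3 : G (t - x) = F (t, φ t) := by rw [hG]; simp only [h4]; rfl
    rwa [h3] at h2
  obtain ⟨b, Φ, hSol, hble, hagree⟩ := exists_solPlus_ext F x y bb φ hPsol
  refine ⟨b, Φ, hSol, ?_, ?_⟩
  · refine lt_of_lt_of_le ?_ hble
    show ((x + (M:ℝ) : ℝ) : EReal) < bb
    rw [hbb]
    exact_mod_cast (by linarith : x + (M:ℝ) < x + c)
  · intro t ht
    have htc : t < x + c := lt_of_le_of_lt ht.2 (by linarith)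
    have htd : t ∈ Dom x bb := ⟨ht.1, by rw [hbb]; exact_mod_cast htc⟩
    rw [hagree t htd]
    have hts : t - x ∈ Set.Icc (0:ℝ) (N:ℝ) := ⟨by linarith [ht.1], by linarith [ht.2]⟩
    simpa [hφ] using hψh (t - x) hts

/-! ### `Bset ⊆ ⋃ CC` -/

lemma Bset_subset (M N h : ℕ) (hMN : N ≤ M) :
    Bset M N h ⊆ ⋃ (j : ℕ) (k : ℕ) (L : ℕ), CC M N h j k L := by
  rintro ⟨F, x, y⟩ ⟨b, φ, ⟨⟨hxb, hφx, hφd⟩, hnext⟩, hMb, hsup⟩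
  dsimp only at hxb hφx hφd hMb hsup ⊢
  have hjex : ∃ j : ℕ, ((x + cj M j : ℝ) : EReal) < b := by
    induction b using EReal.rec with
    | bot => exact absurd hMb (not_lt_bot)
    | coe br =>
      have hbr : x + (M:ℝ) < br := by exact_mod_cast hMb
      obtain ⟨j, hj⟩ := exists_nat_one_div_lt (by linarith : (0:ℝ) < br - (x + M))
      refine ⟨j, ?_⟩
      have hlt : x + cj M j < br := by
        unfold cj; push_cast at hj ⊢; linarith
      exact_mod_cast hlt
    | top => exact ⟨0, EReal.coe_lt_top _⟩
  obtain ⟨j, hj⟩ := hjex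
  set c := cj M j with hc
  have hc0 : 0 < c := cj_pos M j
  have hMc : (M : ℝ) < c := lt_cj M j
  have hNM : (N : ℝ) ≤ (M : ℝ) := by exact_mod_cast hMN
  have hsub : Set.Icc x (x + c) ⊆ Dom x b := fun u hu =>
    ⟨hu.1, lt_of_le_of_lt (by exact_mod_cast hu.2) hj⟩
  have hφcont : ContinuousOn φ (Dom x b) := fun t ht => (hφd t ht).continuousWithinAt
  have hφcont' : ContinuousOn φ (Set.Icc x (x + c)) := hφcont.mono hsub
  obtain ⟨k₀, hk₀⟩ := isCompact_Icc.exists_bound_of_continuousOn hφcont'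
  set k : ℕ := ⌈k₀⌉₊ with hk
  have hk₀k : k₀ ≤ (k : ℝ) := Nat.le_ceil k₀
  have hgcont : ContinuousOn (fun t => F (t, φ t)) (Set.Icc x (x + c)) :=
    F.continuous.comp_continuousOn (continuousOn_id.prodMk hφcont')
  obtain ⟨L₀, hL₀⟩ := isCompact_Icc.exists_bound_of_continuousOn hgcont
  set L : ℕ := ⌈L₀⌉₊ with hL
  have hL₀L : L₀ ≤ (L : ℝ) := Nat.le_ceil L₀
  have hφlip : LipschitzOnWith (L : ℝ≥0) φ (Set.Icc x (x + c)) := by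
    apply (convex_Icc x (x + c)).lipschitzOnWith_of_nnnorm_hasDerivWithin_le
      (f' := fun t => F (t, φ t)) (fun t ht => (hφd t (hsub ht)).mono hsub)
    intro t ht
    rw [← NNReal.coe_le_coe, coe_nnnorm]
    calc ‖F (t, φ t)‖ ≤ L₀ := hL₀ t ht
    _ ≤ (L : ℝ) := hL₀L
    _ = ((L : ℝ≥0) : ℝ) := by simp
  set clamp : ℝ → ℝ := fun s => max 0 (min c s) with hclamp
  have hclampmem : ∀ s, clamp s ∈ Set.Icc (0:ℝ) c := fun s =>
    ⟨le_max_left _ _, max_le (le_of_lt hc0) (min_le_left _ _)⟩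
  have hclamp_eq : ∀ s ∈ Set.Icc (0:ℝ) c, clamp s = s := by
    intro s hs
    rw [hclamp]
    simp only [min_eq_right hs.2, max_eq_right hs.1]
  have hcl_lip : LipschitzWith 1 clamp := by
    refine LipschitzWith.of_dist_le_mul fun a b => ?_
    rw [NNReal.coe_one, one_mul, Real.dist_eq, Real.dist_eq]
    calc |clamp a - clamp b| = |max (min c a) 0 - max (min c b) 0| := by
          rw [hclamp]; simp only [max_comm]
    _ ≤ |min c a - min c b| := abs_max_sub_max_le_abs _ _ _
    _ = |min a c - min b c| := by rw [min_comm c a, min_comm c b]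
    _ ≤ max |a - b| |c - c| := abs_min_sub_min_le_max a c b c
    _ = |a - b| := by simp
  set g : ℝ → ℝ := fun s => x + clamp s with hg
  have hg_lip : LipschitzWith 1 g := by
    refine LipschitzWith.of_dist_le_mul fun a b => ?_
    have := hcl_lip.dist_le_mul a b
    simpa [hg, Real.dist_eq, add_sub_add_left_eq_sub] using this
  have hgmem : ∀ s, g s ∈ Set.Icc x (x + c) := by
    intro s
    have h1 := (hclampmem s).1
    have h2 := (hclampmem s).2
    exact ⟨by rw [hg]; dsimp only; linarith, by rw [hg]; dsimp only; linarith⟩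
  set ψf : ℝ → ℝ := fun s => φ (g s) with hψf
  have hgc : Continuous g := by
    rw [hg, hclamp]
    exact continuous_const.add (continuous_const.max (continuous_const.min continuous_id))
  have hψcont : Continuous ψf := hφcont'.comp_continuous hgc hgmem
  refine Set.mem_iUnion.mpr ⟨j, Set.mem_iUnion.mpr ⟨k, Set.mem_iUnion.mpr ⟨L, ?_⟩⟩⟩
  refine ⟨⟨ψf, hψcont⟩, ⟨?_, ?_⟩, ?_, ?_, ?_⟩
  · show LipschitzWith (L : ℝ≥0) ψf
    have hcomp : LipschitzOnWith ((L : ℝ≥0) * 1) (φ ∘ g) Set.univ :=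
      hφlip.comp (hg_lip.lipschitzOnWith) (fun s _ => hgmem s)
    rw [lipschitzOnWith_univ, mul_one] at hcomp
    exact hcomp
  · intro s
    have hb := hk₀ (g s) (hgmem s)
    rw [Real.norm_eq_abs] at hb
    exact hb.trans hk₀k
  · show ψf 0 = y
    have h0 : clamp 0 = 0 := hclamp_eq 0 ⟨le_rfl, le_of_lt hc0⟩
    rw [hψf, hg]
    dsimp only
    rw [h0, add_zero, hφx]
  · intro s hs
    show |ψf s| ≤ (h : ℝ)
    have hsc : s ∈ Set.Icc (0:ℝ) c := ⟨hs.1, hs.2.trans (by linarith)⟩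
    have heq : ψf s = φ (x + s) := by rw [hψf, hg]; dsimp only; rw [hclamp_eq s hsc]
    rw [heq]
    exact hsup (x + s) ⟨by linarith [hs.1], by linarith [hs.2]⟩
  · intro s hs
    show ψf s = y + ∫ u in (0:ℝ)..s, F (x + u, ψf u)
    have hcl : clamp s = s := hclamp_eq s hs
    have hxs : x ≤ x + s := by linarith [hs.1]
    have hcont2 : ContinuousOn φ (Set.Icc x (x + s)) :=
      hφcont'.mono (Set.Icc_subset_Icc le_rfl (by linarith [hs.2]))
    have hint : IntervalIntegrable (fun t => F (t, φ t)) MeasureTheory.volume x (x + s) := by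
      apply ContinuousOn.intervalIntegrable
      rw [Set.uIcc_of_le hxs]
      exact hgcont.mono (Set.Icc_subset_Icc le_rfl (by linarith [hs.2]))
    have hderiv : ∀ t ∈ Set.Ioo x (x + s), HasDerivWithinAt φ (F (t, φ t)) (Set.Ioi t) t := by
      intro t ht
      obtain ⟨rr, hrr1, hrr2⟩ := exists_real_between hj
      have hsub2 : Set.Ioo x rr ⊆ Dom x b := by
        rintro u ⟨hu1, hu2⟩
        exact ⟨le_of_lt hu1, lt_of_lt_of_le (by exact_mod_cast hu2) hrr2⟩
      have htmem : t ∈ Set.Ioo x rr := ⟨ht.1, by linarith [ht.2, hs.2]⟩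
      have hnhds : Dom x b ∈ nhds t :=
        Filter.mem_of_superset ((isOpen_Ioo).mem_nhds htmem) hsub2
      exact ((hφd t (hsub2 htmem)).hasDerivAt hnhds).hasDerivWithinAt
    have hFTC := intervalIntegral.integral_eq_sub_of_hasDeriv_right_of_le hxs hcont2 hderiv hint
    have hchg : (∫ u in (0:ℝ)..s, F (x + u, ψf u)) = ∫ t in x..(x + s), F (t, φ t) := by
      have h1 : Set.EqOn (fun u => F (x + u, ψf u)) (fun u => F (x + u, φ (x + u)))
          (Set.uIcc (0:ℝ) s) := by
        intro u hu
        rw [Set.uIcc_of_le hs.1] at hu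
        have : ψf u = φ (x + u) := by
          rw [hψf, hg]; dsimp only; rw [hclamp_eq u ⟨hu.1, hu.2.trans hs.2⟩]
        dsimp only
        rw [this]
      rw [intervalIntegral.integral_congr h1]
      have h2 := intervalIntegral.integral_comp_add_left (a := (0:ℝ)) (b := s)
        (fun t => F (t, φ t)) x
      simpa using h2
    have heqs : ψf s = φ (x + s) := by rw [hψf, hg]; dsimp only; rw [hcl]
    rw [hchg, hFTC, heqs, hφx]
    ring

end Statement8Aux

/-- Lemma 5.19(c): for all `M, N, h ∈ ℕ` with `M ≥ N`, the set `B^M_{N,h}` is a `Σ⁰₂`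
subset of `C(ℝ²) × ℝ²`. -/
theorem statement8 (M N h : ℕ) (hMN : N ≤ M) : IsSigma02 (Bset M N h) := by
  classical
  refine ⟨fun n => Statement8Aux.CC M N h n.unpair.1.unpair.1 n.unpair.1.unpair.2 n.unpair.2,
    fun n => Statement8Aux.isClosed_CC M N h _ _ _, ?_⟩
  apply Set.Subset.antisymm
  · intro p hp
    obtain ⟨j, hmem⟩ := Set.mem_iUnion.mp (Statement8Aux.Bset_subset M N h hMN hp)
    obtain ⟨k, hmem⟩ := Set.mem_iUnion.mp hmem
    obtain ⟨L, hmem⟩ := Set.mem_iUnion.mp hmem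
    refine Set.mem_iUnion.mpr ⟨Nat.pair (Nat.pair j k) L, ?_⟩
    simpa [Nat.unpair_pair] using hmem
  · intro p hp
    obtain ⟨n, hmem⟩ := Set.mem_iUnion.mp hp
    exact Statement8Aux.CC_subset_Bset M N h _ _ _ hMN hmem
end
end
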